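/- arXiv:1710.02403 — 13 statements merged into one kernel-verified Lean document; each statement's English description precedes it below -/
import Mathlib

section
/- For every x in the open interval (r₊, ∞), the function f is differentiable at x with derivative f'(x) = ( (x² + (l + a·cos θ)²) · ( (M − x)³ − M·(M² − a² − Q² + l²) ) ) / ( 2·a·x²·Δ(x)^{3/2}·sin θ ). -/
/-!
Write `P = x² + (l + a cos θ)²`. Then `f = N / (c · x · √Δ)` with `N = Δ' P - 4xΔ` and the constant
`c = 4 a sin θ`, and the quotient rule for such a denominator gives
`f' = (2xΔN' - N(2Δ + xΔ')) / (2 c x² √Δ³)`. Since `Δ' = 2(x - M)` and `N' = 2P - 4x(x - M) - 4Δ`,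
the numerator collapses to `4P (MΔ - x(x - M)²)`, which is `4P ((M - x)³ - M(M² - a² + l² - Q²))`
because `Δ = (x - M)² - (M² - a² + l² - Q²)`. The same expression for `Δ` shows `Δ > 0` beyond `r₊`.
-/

open Real

theorem lt_sq_sub_of_add_sqrt_lt {M D x : ℝ} (h : M + √D < x) : D < (x - M) ^ 2 :=
  (sqrt_lt' (by linarith [sqrt_nonneg D])).mp (by linarith)

theorem hasDerivAt_div_mul_sqrt {N Δ : ℝ → ℝ} {N' Δ' c x : ℝ} (hN : HasDerivAt N N' x)
    (hΔ : HasDerivAt Δ Δ' x) (hΔx : 0 < Δ x) (hc : c ≠ 0) (hx : x ≠ 0) :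
    HasDerivAt (fun y => N y / (c * y * √(Δ y)))
      ((2 * x * Δ x * N' - N x * (2 * Δ x + x * Δ')) / (2 * c * x ^ 2 * √(Δ x) ^ 3)) x := by
  have hs : 0 < √(Δ x) := sqrt_pos.mpr hΔx
  have hsq : √(Δ x) ^ 2 = Δ x := sq_sqrt hΔx.le
  have hden := ((hasDerivAt_id' x).const_mul c).fun_mul (hΔ.sqrt hΔx.ne')
  refine (hN.div hden (mul_ne_zero (mul_ne_zero hc hx) hs.ne')).congr_deriv ?_
  generalize √(Δ x) = s at hs hsq ⊢
  rw [← hsq]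
  field_simp

theorem stmt_0_general (M a l Q θ rp : ℝ) (Δ f : ℝ → ℝ)
    (hM : 0 < M) (ha : 0 < a)
    (hθ : θ ∈ Set.Ioo 0 Real.pi)
    (hΔ : ∀ x, Δ x = x^2 - 2*M*x + a^2 - l^2 + Q^2)
    (hrp : rp = M + Real.sqrt (M^2 - a^2 + l^2 - Q^2))
    (hf : ∀ x, f x = ((2*x - 2*M) * (x^2 + (l + a*Real.cos θ)^2) - 4*x*Δ x) /
        (4*a*x*Real.sqrt (Δ x) * Real.sin θ)) :
    ∀ x ∈ Set.Ioi rp,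
      HasDerivAt f
        (((x^2 + (l + a*Real.cos θ)^2) * ((M - x)^3 - M*(M^2 - a^2 - Q^2 + l^2))) /
          (2*a*x^2 * Real.sqrt (Δ x)^3 * Real.sin θ)) x := by
  intro x hx
  rw [Set.mem_Ioi, hrp] at hx
  have hxM : M < x := (le_add_of_nonneg_right (sqrt_nonneg _)).trans_lt hx
  have hΔx : 0 < Δ x := by rw [hΔ]; nlinarith [lt_sq_sub_of_add_sqrt_lt hx]
  have hsin : 0 < sin θ := sin_pos_of_pos_of_lt_pi hθ.1 hθ.2
  have hΔd : HasDerivAt Δ (2 * x - 2 * M) x := by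
    rw [funext hΔ]
    refine ((((hasDerivAt_pow 2 x).fun_sub ((hasDerivAt_id' x).const_mul (2 * M))).add_const
      (a ^ 2)).sub_const (l ^ 2)).add_const (Q ^ 2) |>.congr_deriv ?_
    norm_num
  have hNd := ((((hasDerivAt_id' x).const_mul 2).sub_const (2 * M)).fun_mul
    ((hasDerivAt_pow 2 x).add_const ((l + a * cos θ) ^ 2))).fun_sub
    (((hasDerivAt_id' x).const_mul 4).fun_mul hΔd)
  have hf' : f = fun y => ((2*y - 2*M) * (y^2 + (l + a*cos θ)^2) - 4*y*Δ y) /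
      (4 * a * sin θ * y * √(Δ y)) := funext fun y => by rw [hf]; ring
  rw [hf']
  refine (hasDerivAt_div_mul_sqrt hNd hΔd hΔx (by positivity) (by linarith)).congr_deriv ?_
  rw [hΔ x]
  field_simp
  ring

/-- derivative of `f` on `(r₊, ∞)` for the
Kerr-Newman-Taub-NUT trapping parametrization. -/
theorem stmt_0 (M a l Q θ rp : ℝ) (Δ f : ℝ → ℝ)
    (hM : 0 < M) (ha : 0 < a) (hsub : 0 < M^2 - a^2 + l^2 - Q^2)
    (hθ : θ ∈ Set.Ioo 0 Real.pi)
    (hΔ : ∀ x, Δ x = x^2 - 2*M*x + a^2 - l^2 + Q^2)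
    (hrp : rp = M + Real.sqrt (M^2 - a^2 + l^2 - Q^2))
    (hf : ∀ x, f x = ((2*x - 2*M) * (x^2 + (l + a*Real.cos θ)^2) - 4*x*Δ x) /
        (4*a*x*Real.sqrt (Δ x) * Real.sin θ)) :
    ∀ x ∈ Set.Ioi rp,
      HasDerivAt f
        (((x^2 + (l + a*Real.cos θ)^2) * ((M - x)^3 - M*(M^2 - a^2 - Q^2 + l^2))) /
          (2*a*x^2 * Real.sqrt (Δ x)^3 * Real.sin θ)) x :=
  stmt_0_general M a l Q θ rp Δ f hM ha hθ hΔ hrp hf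
end

section
/- The function f is strictly decreasing (strictly antitone) on the open interval (r₊, ∞). -/
/-!
Put `u = x - M`, `D = M² - a² + l² - Q²` and `c = (l + a cos θ)²`, so that `Δ(x) = u² - D` and
`Δ'(x) = 2u`. Using `Δ + Mu + D = ux`, the formula for `f` splits as
`2 a sin θ · f(x) = -√Δ + M · u/√Δ + D/√Δ + c · (u/√Δ)/x`.
For `u > √D` the first term is strictly decreasing, and `1/√Δ`, `u/√Δ = (1 - D/u²)^(-1/2)` and
`1/x` are positive and decreasing, so, as `M, D, c ≥ 0`, every other term is decreasing too.
-/

open Real Set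

section SqrtSqSub

variable {D : ℝ}

lemma sq_sub_pos_of_sqrt_lt {u : ℝ} (hu : √D < u) : 0 < u ^ 2 - D :=
  sub_pos.2 (lt_sq_of_sqrt_lt hu)

lemma pos_of_sqrt_lt {u : ℝ} (hu : √D < u) : 0 < u :=
  (sqrt_nonneg D).trans_lt hu

lemma strictMonoOn_sqrt_sq_sub : StrictMonoOn (fun u => √(u ^ 2 - D)) (Ioi √D) := by
  intro u hu v hv huv
  have hu0 := pos_of_sqrt_lt hu
  exact sqrt_lt_sqrt (sq_sub_pos_of_sqrt_lt hu).le (by nlinarith)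

lemma strictAntiOn_inv_sqrt_sq_sub : StrictAntiOn (fun u => (√(u ^ 2 - D))⁻¹) (Ioi √D) :=
  fun _ hu _ _ huv => inv_strictAnti₀ (sqrt_pos.2 (sq_sub_pos_of_sqrt_lt hu))
    (strictMonoOn_sqrt_sq_sub hu ‹_› huv)

lemma antitoneOn_div_sqrt_sq_sub (hD : 0 ≤ D) :
    AntitoneOn (fun u => u / √(u ^ 2 - D)) (Ioi √D) := by
  intro u hu v hv huv
  have hu0 := pos_of_sqrt_lt hu
  have hv0 := pos_of_sqrt_lt hv
  have hsu := sq_sub_pos_of_sqrt_lt hu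
  have hsv := sq_sub_pos_of_sqrt_lt hv
  rw [div_le_div_iff₀ (sqrt_pos.2 hsv) (sqrt_pos.2 hsu),
    ← pow_le_pow_iff_left₀ (by positivity) (by positivity) two_ne_zero, mul_pow, mul_pow,
    sq_sqrt hsu.le, sq_sqrt hsv.le]
  nlinarith [mul_le_mul_of_nonneg_left (pow_le_pow_left₀ hu0.le huv 2) hD]

end SqrtSqSub

noncomputable def reducedProfile (D M c u : ℝ) : ℝ :=
  -√(u ^ 2 - D) + M * (u / √(u ^ 2 - D)) + D * (√(u ^ 2 - D))⁻¹ + c * (u / √(u ^ 2 - D)) / (u + M)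

lemma strictAntiOn_reducedProfile {D M c : ℝ} (hD : 0 ≤ D) (hM : 0 ≤ M) (hc : 0 ≤ c) :
    StrictAntiOn (reducedProfile D M c) (Ioi √D) := by
  have hq := antitoneOn_div_sqrt_sq_sub hD
  refine ((strictMonoOn_sqrt_sq_sub.neg.add_antitone ?_).add_antitone ?_).add_antitone ?_
  · exact fun u hu v hv huv => mul_le_mul_of_nonneg_left (hq hu hv huv) hM
  · exact fun u hu v hv huv =>
      mul_le_mul_of_nonneg_left (strictAntiOn_inv_sqrt_sq_sub.antitoneOn hu hv huv) hD
  · intro u hu v hv huv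
    have hu0 := pos_of_sqrt_lt hu
    have hqv : 0 ≤ v / √(v ^ 2 - D) := div_nonneg (pos_of_sqrt_lt hv).le (sqrt_nonneg _)
    simp only [mul_div_assoc]
    exact mul_le_mul_of_nonneg_left (div_le_div₀ (hqv.trans (hq hu hv huv)) (hq hu hv huv)
      (by linarith) (by linarith)) hc

lemma div_eq_reducedProfile {M D c a s x : ℝ} (ha : a ≠ 0) (hs : s ≠ 0) (hx : 0 < x)
    (hΔ : 0 < (x - M) ^ 2 - D) :
    ((2 * x - 2 * M) * (x ^ 2 + c) - 4 * x * ((x - M) ^ 2 - D)) /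
        (4 * a * x * √((x - M) ^ 2 - D) * s) =
      (2 * a * s)⁻¹ * reducedProfile D M c (x - M) := by
  have hw2 := sq_sqrt hΔ.le
  rw [reducedProfile, sub_add_cancel]
  field_simp
  linear_combination 4 * x * hw2

theorem stmt_1 (M a l Q θ rp : ℝ) (Δ f : ℝ → ℝ)
    (hM : 0 < M) (ha : 0 < a) (hsub : 0 < M^2 - a^2 + l^2 - Q^2)
    (hθ : θ ∈ Set.Ioo 0 Real.pi)
    (hΔ : ∀ x, Δ x = x^2 - 2*M*x + a^2 - l^2 + Q^2)
    (hrp : rp = M + Real.sqrt (M^2 - a^2 + l^2 - Q^2))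
    (hf : ∀ x, f x = ((2*x - 2*M) * (x^2 + (l + a*Real.cos θ)^2) - 4*x*Δ x) /
        (4*a*x*Real.sqrt (Δ x) * Real.sin θ)) :
    StrictAntiOn f (Set.Ioi rp) := by
  set D := M ^ 2 - a ^ 2 + l ^ 2 - Q ^ 2
  have hsin : 0 < sin θ := sin_pos_of_pos_of_lt_pi hθ.1 hθ.2
  have hshift : ∀ x ∈ Ioi rp, x - M ∈ Ioi √D := fun x hx => by
    rw [mem_Ioi, hrp] at *; linarith
  have hreduce : ∀ x ∈ Ioi rp,
      f x = (2 * a * sin θ)⁻¹ * reducedProfile D M ((l + a * cos θ) ^ 2) (x - M) := by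
    intro x hx
    have hu := hshift x hx
    rw [hf, hΔ, show x ^ 2 - 2 * M * x + a ^ 2 - l ^ 2 + Q ^ 2 = (x - M) ^ 2 - D by ring]
    exact div_eq_reducedProfile ha.ne' hsin.ne' (by linarith [pos_of_sqrt_lt hu])
      (sq_sub_pos_of_sqrt_lt hu)
  intro x hx y hy hxy
  rw [hreduce x hx, hreduce y hy]
  exact mul_lt_mul_of_pos_left (strictAntiOn_reducedProfile hsub.le hM.le (sq_nonneg _)
    (hshift x hx) (hshift y hy) (by linarith)) (by positivity)
end

section
/- The function f tends to +∞ as x tends to r₊ from the right, i.e., f(x) → +∞ as x → r₊⁺ within (r₊, ∞). -/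
theorem stmt_2 (M a l Q θ rp : ℝ) (Δ f : ℝ → ℝ)
    (hM : 0 < M) (ha : 0 < a) (hsub : 0 < M^2 - a^2 + l^2 - Q^2)
    (hθ : θ ∈ Set.Ioo 0 Real.pi)
    (hΔ : ∀ x, Δ x = x^2 - 2*M*x + a^2 - l^2 + Q^2)
    (hrp : rp = M + Real.sqrt (M^2 - a^2 + l^2 - Q^2))
    (hf : ∀ x, f x = ((2*x - 2*M) * (x^2 + (l + a*Real.cos θ)^2) - 4*x*Δ x) /
        (4*a*x*Real.sqrt (Δ x) * Real.sin θ)) :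
    Filter.Tendsto f (nhdsWithin rp (Set.Ioi rp)) Filter.atTop := by
  have hs0 : 0 < Real.sqrt (M^2 - a^2 + l^2 - Q^2) := Real.sqrt_pos.mpr hsub
  have hs2 : Real.sqrt (M^2 - a^2 + l^2 - Q^2) ^ 2 = M^2 - a^2 + l^2 - Q^2 :=
    Real.sq_sqrt hsub.le
  have hrpM : M < rp := by rw [hrp]; linarith
  have hrp0 : 0 < rp := lt_trans hM hrpM
  have hΔrp : Δ rp = 0 := by rw [hΔ, hrp]; nlinarith [hs2]
  have hsin : 0 < Real.sin θ := Real.sin_pos_of_pos_of_lt_pi hθ.1 hθ.2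
  have hΔpos : ∀ x ∈ Set.Ioi rp, 0 < Δ x := by
    intro x hx
    simp only [Set.mem_Ioi] at hx
    rw [hΔ]
    have h1 : 0 < (x - rp) * (x + rp - 2*M) :=
      mul_pos (by linarith) (by linarith)
    have h2 : rp^2 - 2*M*rp + a^2 - l^2 + Q^2 = 0 := by rw [← hΔ]; exact hΔrp
    nlinarith [h1, h2]
  set C0 := l + a * Real.cos θ with hC0
  set g : ℝ → ℝ := fun x =>
    ((2*x - 2*M) * (x^2 + C0^2) - 4*x*Δ x) / (4*a*x*Real.sin θ) with hg
  have hden : 4*a*rp*Real.sin θ ≠ 0 := by positivity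
  have hCpos : 0 < (2*rp - 2*M) * (rp^2 + C0^2) / (4*a*rp*Real.sin θ) := by
    apply div_pos
    · apply mul_pos (by linarith) (by positivity)
    · positivity
  have hgcont : Filter.Tendsto g (nhdsWithin rp (Set.Ioi rp))
      (nhds ((2*rp - 2*M) * (rp^2 + C0^2) / (4*a*rp*Real.sin θ))) := by
    have hΔcont : Continuous Δ := by
      have : Δ = fun x => x^2 - 2*M*x + a^2 - l^2 + Q^2 := funext hΔ
      rw [this]; fun_prop
    have hnum : Continuous fun x => (2*x - 2*M) * (x^2 + C0^2) - 4*x*Δ x := by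
      fun_prop
    have hden' : Continuous fun x : ℝ => 4*a*x*Real.sin θ := by fun_prop
    have hc : ContinuousAt g rp :=
      ContinuousAt.div hnum.continuousAt hden'.continuousAt hden
    have := hc.tendsto.mono_left (nhdsWithin_le_nhds : nhdsWithin rp (Set.Ioi rp) ≤ nhds rp)
    have hval : g rp = (2*rp - 2*M) * (rp^2 + C0^2) / (4*a*rp*Real.sin θ) := by
      simp only [hg, hΔrp]; ring_nf
    rwa [hval] at this
  have hsqinv : Filter.Tendsto (fun x => (Real.sqrt (Δ x))⁻¹)
      (nhdsWithin rp (Set.Ioi rp)) Filter.atTop := by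
    apply Filter.Tendsto.comp tendsto_inv_nhdsGT_zero
    apply tendsto_nhdsWithin_of_tendsto_nhds_of_eventually_within
    · have hΔcont : Continuous Δ := by
        have : Δ = fun x => x^2 - 2*M*x + a^2 - l^2 + Q^2 := funext hΔ
        rw [this]; fun_prop
      have : Filter.Tendsto (fun x => Real.sqrt (Δ x)) (nhds rp)
          (nhds (Real.sqrt (Δ rp))) :=
        (Real.continuous_sqrt.comp hΔcont).tendsto rp
      rw [hΔrp, Real.sqrt_zero] at this
      exact this.mono_left nhdsWithin_le_nhds
    · filter_upwards [self_mem_nhdsWithin] with x hx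
      exact Real.sqrt_pos.mpr (hΔpos x hx)
  have hmain := hgcont.pos_mul_atTop hCpos hsqinv
  apply hmain.congr'
  filter_upwards [self_mem_nhdsWithin] with x hx
  have hx0 : (0:ℝ) < x := lt_trans hrp0 hx
  have hsq : Real.sqrt (Δ x) ≠ 0 := (Real.sqrt_pos.mpr (hΔpos x hx)).ne'
  rw [hf]
  have h1 : 4*a*x*Real.sqrt (Δ x)*Real.sin θ = (4*a*x*Real.sin θ)*Real.sqrt (Δ x) := by
    ring
  rw [h1, ← div_div, div_eq_mul_inv]
end

section
/- The function f restricted to (r₊, ∞) is a bijection onto ℝ; that is, for every real number y there exists a unique x ∈ (r₊, ∞) with f(x) = y. -/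
/-!
With k = √(M² − a² + l² − Q²) one has Δ(x) = (x − M)² − k² and r₊ = M + k, and f is
N(x) / (C x √Δ(x)) with c = l + a cos θ and C = 4 a sin θ > 0. The derivative of f has the sign of
−((x − M)³ + M k²) < 0, so f is strictly decreasing on (r₊, ∞). As x ↓ r₊ the numerator tends to
2k(r₊² + c²) > 0 while the denominator tends to 0⁺; as x → ∞ the numerator is eventually below
−x³ while the denominator is at most C x². So f decreases from +∞ to −∞, and the intermediate
value theorem gives the bijection.
-/

open Filter Topology Set

theorem existsUnique_mem_Ioi_eq_of_strictAntiOn {f : ℝ → ℝ} {r : ℝ}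
    (hcont : ContinuousOn f (Ioi r)) (hanti : StrictAntiOn f (Ioi r))
    (hright : Tendsto f (𝓝[>] r) atTop) (htop : Tendsto f atTop atBot) (y : ℝ) :
    ∃! x, x ∈ Ioi r ∧ f x = y := by
  obtain ⟨x₁, hfx₁, hx₁⟩ :=
    ((hright.eventually (eventually_ge_atTop y)).and self_mem_nhdsWithin).exists
  obtain ⟨x₂, hfx₂, hx₂⟩ :=
    ((htop.eventually (eventually_le_atBot y)).and (eventually_gt_atTop r)).exists
  have hsub : uIcc x₁ x₂ ⊆ Ioi r := ordConnected_Ioi.uIcc_subset hx₁ hx₂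
  obtain ⟨x, hx, rfl⟩ :=
    intermediate_value_uIcc (hcont.mono hsub) (mem_uIcc.2 (Or.inr ⟨hfx₂, hfx₁⟩))
  exact ⟨x, ⟨hsub hx, rfl⟩, fun x' ⟨hx', hfx'⟩ => hanti.injOn hx' (hsub hx) hfx'⟩

noncomputable def kerrProfile (M k c C x : ℝ) : ℝ :=
  ((2*x - 2*M) * (x^2 + c^2) - 4*x*((x - M)^2 - k^2)) / (C * x * √((x - M)^2 - k^2))

theorem hasDerivAt_kerrProfile {M k c C x : ℝ} (hC : C ≠ 0) (hx : x ≠ 0)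
    (hΔ : 0 < (x - M)^2 - k^2) :
    HasDerivAt (kerrProfile M k c C)
      (-2 * (x^2 + c^2) * ((x - M)^3 + M*k^2) / (C * x^2 * √((x - M)^2 - k^2)^3)) x := by
  have hΔ' : HasDerivAt (fun x => (x - M)^2 - k^2) (2 * (x - M)) x := by
    simpa using (((hasDerivAt_id x).sub_const M).pow 2).sub_const (k^2)
  have hN : HasDerivAt (fun x => (2*x - 2*M) * (x^2 + c^2) - 4*x*((x - M)^2 - k^2))
      (2 * (x^2 + c^2) + (2*x - 2*M) * (2*x) - (4 * ((x - M)^2 - k^2) + 4*x*(2*(x - M)))) x := by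
    have h1 : HasDerivAt (fun x => 2*x - 2*M) 2 x := by
      simpa using ((hasDerivAt_id x).const_mul 2).sub_const (2*M)
    have h2 : HasDerivAt (fun x => x^2 + c^2) (2*x) x := by
      simpa using (hasDerivAt_pow 2 x).add_const (c^2)
    have h3 : HasDerivAt (fun x => 4*x) 4 x := by simpa using (hasDerivAt_id x).const_mul 4
    exact (h1.mul h2).sub (h3.mul hΔ')
  have hD : HasDerivAt (fun x => C * x * √((x - M)^2 - k^2))
      (C * √((x - M)^2 - k^2) + C * x * (2 * (x - M) / (2 * √((x - M)^2 - k^2)))) x :=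
    (((hasDerivAt_id' x).const_mul C).mul (hΔ'.sqrt hΔ.ne')).congr_deriv (by ring)
  have hu : 0 < √((x - M)^2 - k^2) := Real.sqrt_pos.2 hΔ
  refine (hN.div hD (by positivity)).congr_deriv ?_
  have hu2 := Real.sq_sqrt hΔ.le
  field_simp
  linear_combination (2 * M * (x^2 + c^2) + 4 * x^2 * (M - x)) * hu2

theorem sq_sub_sq_pos_of_add_lt {M k x : ℝ} (hk : 0 ≤ k) (hx : M + k < x) :
    0 < (x - M)^2 - k^2 := by
  nlinarith

section

variable {M k c C : ℝ} (hM : 0 < M) (hC : 0 < C)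
include hM hC

theorem hasDerivAt_kerrProfile_of_add_lt {x : ℝ} (hk : 0 ≤ k) (hx : M + k < x) :
    HasDerivAt (kerrProfile M k c C)
      (-2 * (x^2 + c^2) * ((x - M)^3 + M*k^2) / (C * x^2 * √((x - M)^2 - k^2)^3)) x :=
  hasDerivAt_kerrProfile hC.ne' (by linarith) (sq_sub_sq_pos_of_add_lt hk hx)

theorem continuousOn_kerrProfile (hk : 0 ≤ k) : ContinuousOn (kerrProfile M k c C) (Ioi (M + k)) :=
  fun _ hx => (hasDerivAt_kerrProfile_of_add_lt hM hC hk hx).continuousAt.continuousWithinAt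

theorem strictAntiOn_kerrProfile (hk : 0 ≤ k) :
    StrictAntiOn (kerrProfile M k c C) (Ioi (M + k)) := by
  refine strictAntiOn_of_deriv_neg (convex_Ioi _) (continuousOn_kerrProfile hM hC hk) ?_
  rw [interior_Ioi]
  intro x hx
  have hxM : 0 < x - M := by linarith [mem_Ioi.1 hx]
  have hx0 : 0 < x := by linarith
  have hu : 0 < √((x - M)^2 - k^2) := Real.sqrt_pos.2 (sq_sub_sq_pos_of_add_lt hk hx)
  rw [(hasDerivAt_kerrProfile_of_add_lt hM hC hk hx).deriv]
  apply div_neg_of_neg_of_pos _ (by positivity)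
  have : 0 < (x^2 + c^2) * ((x - M)^3 + M*k^2) := by positivity
  linarith

theorem tendsto_kerrProfile_nhdsGT (hk : 0 < k) :
    Tendsto (kerrProfile M k c C) (𝓝[>] (M + k)) atTop := by
  have hnum : Tendsto (fun x => (2*x - 2*M) * (x^2 + c^2) - 4*x*((x - M)^2 - k^2)) (𝓝[>] (M + k))
      (𝓝 (2*k*((M + k)^2 + c^2))) :=
    tendsto_nhdsWithin_of_tendsto_nhds <|
      (by fun_prop : Continuous _).tendsto' _ _ (by ring)
  have hden : Tendsto (fun x => C * x * √((x - M)^2 - k^2)) (𝓝[>] (M + k)) (𝓝[>] 0) := by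
    refine tendsto_nhdsWithin_iff.2 ⟨tendsto_nhdsWithin_of_tendsto_nhds <|
      (by fun_prop : Continuous _).tendsto' _ _ (by simp), ?_⟩
    filter_upwards [self_mem_nhdsWithin] with x hx
    have hu : 0 < √((x - M)^2 - k^2) := Real.sqrt_pos.2 (sq_sub_sq_pos_of_add_lt hk.le hx)
    have : 0 < x := by linarith [mem_Ioi.1 hx]
    exact mem_Ioi.2 (by positivity)
  exact (hnum.pos_mul_atTop (by positivity) (tendsto_inv_nhdsGT_zero.comp hden)).congr
    fun x => (div_eq_mul_inv _ _).symm

theorem tendsto_kerrProfile_atTop (hk : 0 ≤ k) : Tendsto (kerrProfile M k c C) atTop atBot := by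
  refine tendsto_atBot_mono' _ ?_ (tendsto_neg_atTop_atBot.atBot_div_const hC)
  filter_upwards [eventually_gt_atTop (M + k), eventually_ge_atTop (6*M + 2*c^2 + 4*k^2 + 1)]
    with x hxr hxK
  have hx : 0 < x := by linarith
  have hu : 0 < √((x - M)^2 - k^2) := Real.sqrt_pos.2 (sq_sub_sq_pos_of_add_lt hk hxr)
  have hux : √((x - M)^2 - k^2) ≤ x := Real.sqrt_le_iff.2 ⟨hx.le, by nlinarith⟩
  rw [kerrProfile, div_le_iff₀ (by positivity)]
  calc (2*x - 2*M) * (x^2 + c^2) - 4*x*((x - M)^2 - k^2)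
      ≤ -x^3 := by
        have hx1 : 1 ≤ x := by nlinarith
        nlinarith [mul_nonneg (sq_nonneg x) (sub_nonneg.2 hxK),
          mul_nonneg (by positivity : (0:ℝ) ≤ 2*c^2 + 4*k^2) (mul_nonneg hx.le (sub_nonneg.2 hx1)),
          mul_nonneg hM.le (sq_nonneg c), mul_nonneg hx.le (sq_nonneg M)]
    _ ≤ -(x^2 * √((x - M)^2 - k^2)) := by nlinarith
    _ = -x / C * (C * x * √((x - M)^2 - k^2)) := by field_simp

end

theorem stmt_4 (M a l Q θ rp : ℝ) (Δ f : ℝ → ℝ)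
    (hM : 0 < M) (ha : 0 < a) (hsub : 0 < M^2 - a^2 + l^2 - Q^2)
    (hθ : θ ∈ Set.Ioo 0 Real.pi)
    (hΔ : ∀ x, Δ x = x^2 - 2*M*x + a^2 - l^2 + Q^2)
    (hrp : rp = M + Real.sqrt (M^2 - a^2 + l^2 - Q^2))
    (hf : ∀ x, f x = ((2*x - 2*M) * (x^2 + (l + a*Real.cos θ)^2) - 4*x*Δ x) /
        (4*a*x*Real.sqrt (Δ x) * Real.sin θ)) :
    ∀ y : ℝ, ∃! x, x ∈ Set.Ioi rp ∧ f x = y := by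
  set k := √(M^2 - a^2 + l^2 - Q^2)
  have hk : 0 < k := Real.sqrt_pos.2 hsub
  have hC : 0 < 4 * a * Real.sin θ := by
    have := Real.sin_pos_of_pos_of_lt_pi hθ.1 hθ.2
    positivity
  have hfk : f = kerrProfile M k (l + a * Real.cos θ) (4 * a * Real.sin θ) := by
    funext x
    have hΔx : Δ x = (x - M)^2 - k^2 := by rw [hΔ, Real.sq_sqrt hsub.le]; ring
    rw [hf, hΔx, kerrProfile]
    ring
  subst hrp hfk
  exact existsUnique_mem_Ioi_eq_of_strictAntiOn (continuousOn_kerrProfile hM hC hk.le)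
    (strictAntiOn_kerrProfile hM hC hk.le) (tendsto_kerrProfile_nhdsGT hM hC hk)
    (tendsto_kerrProfile_atTop hM hC hk.le)
end

section
/- For every r > r₊ and every x ∈ (r₊, ∞), the quantity 4x·Δ(x) + (r² − x²)·Δ'(x) is strictly positive. -/
/-- positivity of the denominator `4xΔ(x) + (r² − x²)Δ'(x)`. -/
theorem stmt_5 (M a l Q rp : ℝ) (Δ : ℝ → ℝ)
    (hM : 0 < M) (ha : 0 < a) (hsub : 0 < M^2 - a^2 + l^2 - Q^2)
    (hΔ : ∀ x, Δ x = x^2 - 2*M*x + a^2 - l^2 + Q^2)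
    (hrp : rp = M + Real.sqrt (M^2 - a^2 + l^2 - Q^2)) :
    ∀ r, rp < r → ∀ x ∈ Set.Ioi rp,
      0 < 4*x*Δ x + (r^2 - x^2)*(2*x - 2*M) := by
  intro r hr x hx
  simp only [Set.mem_Ioi] at hx
  set s := Real.sqrt (M^2 - a^2 + l^2 - Q^2) with hsdef
  have hs2 : s^2 = M^2 - a^2 + l^2 - Q^2 := Real.sq_sqrt hsub.le
  have hs0 : 0 < s := Real.sqrt_pos.mpr hsub
  rw [hΔ]
  subst hrp
  have hrp0 : 0 < M + s := by linarith
  have hr2 : (M + s)^2 < r^2 := by nlinarith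
  have hxM : 0 < x - M := by linarith
  have ht : 0 < x - (M + s) := by linarith
  nlinarith [mul_pos hxM (sub_pos.mpr hr2), mul_pos ht hs0, mul_pos ht ht,
    mul_pos (mul_pos ht hs0) hM, mul_pos (mul_pos ht ht) hs0,
    mul_pos (mul_pos ht ht) ht, mul_pos (mul_pos ht hs0) hs0]
end

section
/- For every x in the open interval (r₊, ∞), the function h is differentiable at x with derivative h'(x) = ( 2·(r² − x²)·Δ(r)·( (x − M)³ + M·(M² − a² − Q² + l²) ) ) / ( √(Δ(x)·Δ(r)) · ( (r² − x²)·Δ'(x)/2 + 2x·Δ(x) )² ). -/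
/-!
Write `Δ x = (x - M)² - k` with `k = M² - a² + l² - Q²` and let `D` be the denominator of `h`.
By the quotient rule `h' = 2 Δ(r) ((2Δ + xΔ') D - 2xΔ D') / (√(Δ(r) Δ(x)) D²)`. In the numerator
the terms in `x Δ²` and `x² Δ Δ'` cancel, leaving
`(r² - x²) (2ΔΔ' + xΔ'² - 4xΔ) = 4 (r² - x²) ((x - M)³ + M k)`.
Beyond `r₊` both `x - M` and `r - M` exceed `√k`, so `Δ(x), Δ(r) > 0` and `(x - M)(r - M) > k`;
then `D = 2(x - M)(Δ(r) + Δ(x)) + 4M((x - M)(r - M) - k) > 0`.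
-/

open Real

theorem hasDerivAt_mul_sqrt_div {g D : ℝ → ℝ} {g' D' x : ℝ} (hg : HasDerivAt g g' x)
    (hD : HasDerivAt D D' x) (hgx : 0 < g x) (hDx : D x ≠ 0) :
    HasDerivAt (fun y => y * √(g y) / D y)
      (((2 * g x + x * g') * D x - 2 * x * g x * D') / (2 * √(g x) * D x ^ 2)) x := by
  refine (((hasDerivAt_id' x).fun_mul (hg.sqrt hgx.ne')).fun_div hD hDx).congr_deriv ?_
  have hs : 0 < √(g x) := sqrt_pos.mpr hgx
  field_simp
  rw [sq_sqrt hgx.le]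
  ring

theorem hasDerivAt_sub_sq_sub (M k x : ℝ) :
    HasDerivAt (fun y => (y - M) ^ 2 - k) (2 * x - 2 * M) x :=
  (((hasDerivAt_id' x).sub_const M).fun_pow 2).sub_const k |>.congr_deriv (by ring)

theorem hasDerivAt_denominator (M k r x : ℝ) :
    HasDerivAt (fun y => (2 * y - 2 * M) * (r ^ 2 - y ^ 2) + 4 * y * ((y - M) ^ 2 - k))
      (2 * (r ^ 2 - x ^ 2) + 2 * x * (2 * x - 2 * M) + 4 * ((x - M) ^ 2 - k)) x := by
  have hlin := ((hasDerivAt_id' x).const_mul 2).sub_const (2 * M)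
  have hquad := ((hasDerivAt_id' x).fun_pow 2).const_sub (r ^ 2)
  have hcub := ((hasDerivAt_id' x).const_mul 4).fun_mul (hasDerivAt_sub_sq_sub M k x)
  exact (hlin.fun_mul hquad).add hcub |>.congr_deriv (by ring)

theorem quotient_numerator_eq (M k r x c : ℝ) :
    (2 * (c * ((x - M) ^ 2 - k)) + x * (c * (2 * x - 2 * M))) *
        ((2 * x - 2 * M) * (r ^ 2 - x ^ 2) + 4 * x * ((x - M) ^ 2 - k)) -
      2 * x * (c * ((x - M) ^ 2 - k)) *
        (2 * (r ^ 2 - x ^ 2) + 2 * x * (2 * x - 2 * M) + 4 * ((x - M) ^ 2 - k)) =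
      4 * c * (r ^ 2 - x ^ 2) * ((x - M) ^ 3 + M * k) := by
  ring

theorem lt_mul_of_sqrt_lt {k u v : ℝ} (hu : √k < u) (hv : √k < v) : k < u * v := by
  have hu0 : 0 < u := (sqrt_nonneg k).trans_lt hu
  have hv0 : 0 < v := (sqrt_nonneg k).trans_lt hv
  nlinarith [lt_sq_of_sqrt_lt hu, lt_sq_of_sqrt_lt hv]

theorem denominator_pos {M k x r : ℝ} (hM : 0 ≤ M) (hx : M + √k < x) (hr : M + √k < r) :
    0 < (2 * x - 2 * M) * (r ^ 2 - x ^ 2) + 4 * x * ((x - M) ^ 2 - k) := by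
  have hxM : √k < x - M := by linarith
  have hrM : √k < r - M := by linarith
  have hΔx := sub_pos.mpr (lt_sq_of_sqrt_lt hxM)
  have hΔr := sub_pos.mpr (lt_sq_of_sqrt_lt hrM)
  have hu : 0 < x - M := (sqrt_nonneg k).trans_lt hxM
  have hprod := sub_pos.mpr (lt_mul_of_sqrt_lt hxM hrM)
  have key : (2 * x - 2 * M) * (r ^ 2 - x ^ 2) + 4 * x * ((x - M) ^ 2 - k) =
      2 * (x - M) * ((r - M) ^ 2 - k) + 2 * (x - M) * ((x - M) ^ 2 - k) +
        4 * M * ((x - M) * (r - M) - k) := by ring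
  rw [key]
  positivity

theorem stmt_6_general (M a l Q rp r : ℝ) (Δ h : ℝ → ℝ)
    (hM : 0 < M)
    (hΔ : ∀ x, Δ x = x^2 - 2*M*x + a^2 - l^2 + Q^2)
    (hrp : rp = M + Real.sqrt (M^2 - a^2 + l^2 - Q^2))
    (hr : rp < r)
    (hh : ∀ x, h x = 4*x*Real.sqrt (Δ r * Δ x) /
        ((2*x - 2*M)*(r^2 - x^2) + 4*x*Δ x)) :
    ∀ x ∈ Set.Ioi rp,
      HasDerivAt h
        ((2*(r^2 - x^2) * Δ r * ((x - M)^3 + M*(M^2 - a^2 - Q^2 + l^2))) /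
          (Real.sqrt (Δ x * Δ r) * ((r^2 - x^2)*(2*x - 2*M)/2 + 2*x*Δ x)^2)) x := by
  intro x hx
  obtain ⟨k, hk⟩ : ∃ k, M ^ 2 - a ^ 2 + l ^ 2 - Q ^ 2 = k := ⟨_, rfl⟩
  have hΔk : Δ = fun y => (y - M) ^ 2 - k := funext fun y => by rw [hΔ, ← hk]; ring
  rw [show M ^ 2 - a ^ 2 - Q ^ 2 + l ^ 2 = k by rw [← hk]; ring]
  rw [hk] at hrp
  subst hΔk hrp
  have hΔx : 0 < (x - M) ^ 2 - k := sub_pos.mpr (lt_sq_of_sqrt_lt (by linarith [hx.out]))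
  have hΔr : 0 < (r - M) ^ 2 - k := sub_pos.mpr (lt_sq_of_sqrt_lt (by linarith))
  have hDx := denominator_pos hM.le hx hr
  have hquot := (hasDerivAt_mul_sqrt_div ((hasDerivAt_sub_sq_sub M k x).const_mul _)
    (hasDerivAt_denominator M k r x) (mul_pos hΔr hΔx) hDx.ne').const_mul 4
  refine (hquot.congr_of_eventuallyEq (.of_forall fun y => by rw [hh]; ring)).congr_deriv ?_
  have hs : 0 < √(((r - M) ^ 2 - k) * ((x - M) ^ 2 - k)) := sqrt_pos.mpr (mul_pos hΔr hΔx)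
  have hhalf : (r ^ 2 - x ^ 2) * (2 * x - 2 * M) / 2 + 2 * x * ((x - M) ^ 2 - k) =
      ((2 * x - 2 * M) * (r ^ 2 - x ^ 2) + 4 * x * ((x - M) ^ 2 - k)) / 2 := by ring
  beta_reduce
  rw [quotient_numerator_eq, mul_comm ((x - M) ^ 2 - k), hhalf]
  field_simp
  ring

theorem stmt_6 (M a l Q rp r : ℝ) (Δ h : ℝ → ℝ)
    (hM : 0 < M) (ha : 0 < a) (hsub : 0 < M^2 - a^2 + l^2 - Q^2)
    (hΔ : ∀ x, Δ x = x^2 - 2*M*x + a^2 - l^2 + Q^2)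
    (hrp : rp = M + Real.sqrt (M^2 - a^2 + l^2 - Q^2))
    (hr : rp < r)
    (hh : ∀ x, h x = 4*x*Real.sqrt (Δ r * Δ x) /
        ((2*x - 2*M)*(r^2 - x^2) + 4*x*Δ x)) :
    ∀ x ∈ Set.Ioi rp,
      HasDerivAt h
        ((2*(r^2 - x^2) * Δ r * ((x - M)^3 + M*(M^2 - a^2 - Q^2 + l^2))) /
          (Real.sqrt (Δ x * Δ r) * ((r^2 - x^2)*(2*x - 2*M)/2 + 2*x*Δ x)^2)) x :=
  stmt_6_general M a l Q rp r Δ h hM hΔ hrp hr hh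
end

section
/- The function h is strictly increasing on the interval (r₊, r] and strictly decreasing on the interval [r, ∞); equivalently, h'(x) > 0 for r₊ < x < r and h'(x) < 0 for x > r. -/
/-!
Write `Δ(y) = (y - M)² - s²` with `s = √(M² - a² + l² - Q²)`, so that `r₊ = M + s`, and
`N(x) = Δ'(x)(r² - x²) + 4xΔ(x)` for the denominator of `h`. A direct computation gives

  `h'(x) = -8 Δ(r) (x - r)(x + r) ((x - M)³ + M s²) / (√(Δ(r) Δ(x)) · N(x)²)`,

and for `x > r₊` every factor except `x - r` is positive; for `N` this follows from
`N(x) = 2(x - M)(r² - r₊²) + 2(x - r₊)((x - M)(x - M + s) + 2Ms)`.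
The sign of `h'` is therefore that of `r - x`.
-/

open Set

namespace Horizon

variable {M s r x : ℝ}

lemma sq_sub_sq_pos_of_add_lt (hs : 0 ≤ s) (hx : M + s < x) : 0 < (x - M) ^ 2 - s ^ 2 := by
  nlinarith

lemma denom_pos (hM : 0 ≤ M) (hs : 0 ≤ s) (hr : M + s < r) (hx : M + s < x) :
    0 < (2 * x - 2 * M) * (r ^ 2 - x ^ 2) + 4 * x * ((x - M) ^ 2 - s ^ 2) := by
  have hrs : 0 < r ^ 2 - (M + s) ^ 2 := by nlinarith
  have hfactor : 0 < (x - M) * (x - M + s) + 2 * M * s := by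
    have : 0 < (x - M) * (x - M + s) := by apply mul_pos <;> linarith
    nlinarith [mul_nonneg hM hs]
  calc (0 : ℝ) < 2 * (x - M) * (r ^ 2 - (M + s) ^ 2)
          + 2 * (x - M - s) * ((x - M) * (x - M + s) + 2 * M * s) := by
        have : 0 < x - M := by linarith
        have : 0 < x - M - s := by linarith
        positivity
    _ = _ := by ring

lemma cubic_pos (hM : 0 ≤ M) (hs : 0 ≤ s) (hx : M + s < x) : 0 < (x - M) ^ 3 + M * s ^ 2 := by
  have : 0 < (x - M) ^ 3 := pow_pos (by linarith) 3
  positivity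

lemma hasDerivAt (hM : 0 ≤ M) (hs : 0 ≤ s) (hr : M + s < r) (hx : M + s < x)
    {D h : ℝ → ℝ} (hD : ∀ y, D y = (y - M) ^ 2 - s ^ 2)
    (hh : ∀ y, h y = 4 * y * √(D r * D y) / ((2 * y - 2 * M) * (r ^ 2 - y ^ 2) + 4 * y * D y)) :
    HasDerivAt h (-8 * D r * (x - r) * (x + r) * ((x - M) ^ 3 + M * s ^ 2) /
      (√(D r * D x) * ((2 * x - 2 * M) * (r ^ 2 - x ^ 2) + 4 * x * D x) ^ 2)) x := by
  have hDr : 0 < D r := hD r ▸ sq_sub_sq_pos_of_add_lt hs hr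
  have hDx : 0 < D x := hD x ▸ sq_sub_sq_pos_of_add_lt hs hx
  have hN := hD x ▸ denom_pos hM hs hr hx
  have hD' : HasDerivAt D (2 * x - 2 * M) x := by
    rw [show D = fun y => (y - M) ^ 2 - s ^ 2 from funext hD]
    refine (((hasDerivAt_pow 2 (x - M)).comp_sub_const x M).sub_const (s ^ 2)).congr_deriv ?_
    ring
  have hsqrt := (hD'.const_mul (D r)).sqrt (mul_pos hDr hDx).ne'
  have hlin : HasDerivAt (fun y : ℝ => 4 * y) 4 x := by
    simpa using (hasDerivAt_id x).const_mul (4 : ℝ)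
  have hnum := hlin.mul hsqrt
  have hden := (((hasDerivAt_id x).const_mul 2).sub_const (2 * M)).mul
    ((hasDerivAt_pow 2 x).const_sub (r ^ 2)) |>.add (hlin.mul hD')
  rw [show h = _ from funext hh]
  refine (hnum.div hden hN.ne').congr_deriv ?_
  have ht := Real.sq_sqrt (mul_pos hDr hDx).le
  simp only [Pi.mul_apply, Pi.add_apply, id, Nat.cast_ofNat, Nat.reduceSub, pow_one]
  field_simp
  rw [ht, hD x]
  ring

lemma exists_pos_hasDerivAt_sub_mul (hM : 0 ≤ M) (hs : 0 ≤ s) (hr : M + s < r)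
    (hx : M + s < x) {D h : ℝ → ℝ} (hD : ∀ y, D y = (y - M) ^ 2 - s ^ 2)
    (hh : ∀ y, h y = 4 * y * √(D r * D y) / ((2 * y - 2 * M) * (r ^ 2 - y ^ 2) + 4 * y * D y)) :
    ∃ c > 0, HasDerivAt h ((r - x) * c) x := by
  have hDr : 0 < D r := hD r ▸ sq_sub_sq_pos_of_add_lt hs hr
  have hDx : 0 < D x := hD x ▸ sq_sub_sq_pos_of_add_lt hs hx
  have hN := hD x ▸ denom_pos hM hs hr hx
  have hG := cubic_pos hM hs hx
  have hxr : 0 < x + r := by linarith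
  refine ⟨8 * D r * (x + r) * ((x - M) ^ 3 + M * s ^ 2) /
      (√(D r * D x) * ((2 * x - 2 * M) * (r ^ 2 - x ^ 2) + 4 * x * D x) ^ 2), ?_,
    (hasDerivAt hM hs hr hx hD hh).congr_deriv (by ring)⟩
  have := Real.sqrt_pos.mpr (mul_pos hDr hDx)
  positivity

end Horizon

open Horizon

theorem stmt_7_general (M a l Q rp r : ℝ) (Δ h : ℝ → ℝ)
    (hM : 0 < M) (hsub : 0 < M^2 - a^2 + l^2 - Q^2)
    (hΔ : ∀ x, Δ x = x^2 - 2*M*x + a^2 - l^2 + Q^2)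
    (hrp : rp = M + Real.sqrt (M^2 - a^2 + l^2 - Q^2))
    (hr : rp < r)
    (hh : ∀ x, h x = 4*x*Real.sqrt (Δ r * Δ x) /
        ((2*x - 2*M)*(r^2 - x^2) + 4*x*Δ x)) :
    StrictMonoOn h (Set.Ioc rp r) ∧ StrictAntiOn h (Set.Ici r) ∧
      (∀ x, rp < x → x < r → 0 < deriv h x) ∧ (∀ x, r < x → deriv h x < 0) := by
  set s := √(M ^ 2 - a ^ 2 + l ^ 2 - Q ^ 2)
  have hs : 0 ≤ s := Real.sqrt_nonneg _
  have hD : ∀ y, Δ y = (y - M) ^ 2 - s ^ 2 := fun y => by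
    rw [hΔ, Real.sq_sqrt hsub.le]; ring
  subst hrp
  have hderiv x (hx : M + s < x) := exists_pos_hasDerivAt_sub_mul hM.le hs hr hx hD hh
  have hderiv_pos x (hx : M + s < x) (hxr : x < r) : 0 < deriv h x := by
    obtain ⟨c, hc, hd⟩ := hderiv x hx
    rw [hd.deriv]
    exact mul_pos (by linarith) hc
  have hderiv_neg x (hxr : r < x) : deriv h x < 0 := by
    obtain ⟨c, hc, hd⟩ := hderiv x (hr.trans hxr)
    rw [hd.deriv]
    exact mul_neg_of_neg_of_pos (by linarith) hc
  have hcont : ContinuousOn h (Ioi (M + s)) := fun x hx => by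
    obtain ⟨_, -, hd⟩ := hderiv x hx
    exact hd.continuousAt.continuousWithinAt
  refine ⟨strictMonoOn_of_deriv_pos (convex_Ioc _ _) (hcont.mono Ioc_subset_Ioi_self) ?_,
    strictAntiOn_of_deriv_neg (convex_Ici _) (hcont.mono (Ici_subset_Ioi.mpr hr)) ?_,
    hderiv_pos, hderiv_neg⟩
  · rw [interior_Ioc]
    exact fun x hx => hderiv_pos x hx.1 hx.2
  · rw [interior_Ici]
    exact hderiv_neg

theorem stmt_7 (M a l Q rp r : ℝ) (Δ h : ℝ → ℝ)
    (hM : 0 < M) (ha : 0 < a) (hsub : 0 < M^2 - a^2 + l^2 - Q^2)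
    (hΔ : ∀ x, Δ x = x^2 - 2*M*x + a^2 - l^2 + Q^2)
    (hrp : rp = M + Real.sqrt (M^2 - a^2 + l^2 - Q^2))
    (hr : rp < r)
    (hh : ∀ x, h x = 4*x*Real.sqrt (Δ r * Δ x) /
        ((2*x - 2*M)*(r^2 - x^2) + 4*x*Δ x)) :
    StrictMonoOn h (Set.Ioc rp r) ∧ StrictAntiOn h (Set.Ici r) ∧
      (∀ x, rp < x → x < r → 0 < deriv h x) ∧ (∀ x, r < x → deriv h x < 0) :=
  stmt_7_general M a l Q rp r Δ h hM hsub hΔ hrp hr hh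
end

section
/- One has h(r) = 1, and for every x ∈ (r₊, ∞) one has 0 < h(x) ≤ 1, with h(x) = 1 if and only if x = r. -/
theorem stmt_8 (M a l Q rp r : ℝ) (Δ h : ℝ → ℝ)
    (hM : 0 < M) (ha : 0 < a) (hsub : 0 < M^2 - a^2 + l^2 - Q^2)
    (hΔ : ∀ x, Δ x = x^2 - 2*M*x + a^2 - l^2 + Q^2)
    (hrp : rp = M + Real.sqrt (M^2 - a^2 + l^2 - Q^2))
    (hr : rp < r)
    (hh : ∀ x, h x = 4*x*Real.sqrt (Δ r * Δ x) /
        ((2*x - 2*M)*(r^2 - x^2) + 4*x*Δ x)) :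
    h r = 1 ∧ ∀ x ∈ Set.Ioi rp, 0 < h x ∧ h x ≤ 1 ∧ (h x = 1 ↔ x = r) := by
  have hsq0 : 0 < Real.sqrt (M^2 - a^2 + l^2 - Q^2) := Real.sqrt_pos.mpr hsub
  have hsqsq : (Real.sqrt (M^2 - a^2 + l^2 - Q^2))^2 = M^2 - a^2 + l^2 - Q^2 :=
    Real.sq_sqrt hsub.le
  have hrpM : M < rp := by rw [hrp]; linarith
  -- basic facts for any x > rp
  have hbasic : ∀ x, rp < x → 0 < Δ x ∧ Real.sqrt (Δ x) < x - M := by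
    intro x hx
    have hxM : Real.sqrt (M^2 - a^2 + l^2 - Q^2) < x - M := by
      rw [hrp] at hx; linarith
    have h1 : Δ x = (x - M)^2 - (M^2 - a^2 + l^2 - Q^2) := by rw [hΔ]; ring
    have hpos : 0 < Δ x := by rw [h1]; nlinarith
    have hlt : Real.sqrt (Δ x) < x - M := by
      rw [show x - M = Real.sqrt ((x-M)^2) from
        (Real.sqrt_sq (by linarith : (0:ℝ) ≤ x - M)).symm]
      apply Real.sqrt_lt_sqrt hpos.le
      rw [h1]; linarith
    exact ⟨hpos, hlt⟩
  obtain ⟨hΔr, hsrlt⟩ := hbasic r hr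
  have hsr2 : (Real.sqrt (Δ r))^2 = Δ r := Real.sq_sqrt hΔr.le
  have hsr0 : 0 < Real.sqrt (Δ r) := Real.sqrt_pos.mpr hΔr
  have main : ∀ x, rp < x → 0 < h x ∧ h x ≤ 1 ∧ (h x = 1 ↔ x = r) := by
    intro x hx
    obtain ⟨hΔx, hsxlt⟩ := hbasic x hx
    set sx := Real.sqrt (Δ x) with hsxdef
    set sr := Real.sqrt (Δ r) with hsrdef
    have hsx2 : sx^2 = Δ x := Real.sq_sqrt hΔx.le
    have hsx0 : 0 < sx := Real.sqrt_pos.mpr hΔx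
    have hx0 : 0 < x := by linarith
    have hxM : M < x := by linarith
    have hrM : M < r := by linarith
    have hmul : Real.sqrt (Δ r * Δ x) = sr * sx := Real.sqrt_mul hΔr.le (Δ x)
    set num := 4*x*(sr*sx) with hnumdef
    set Dx := (2*x - 2*M)*(r^2 - x^2) + 4*x*Δ x with hDxdef
    have hs0 : 0 < sx + sr := by linarith
    have hslt : sx + sr < x + r - 2*M := by linarith
    -- identity: Dx - num = 2x(sx-sr)^2 - 2M(x-r)^2
    have hgap : Dx - num = 2*x*(sx - sr)^2 - 2*M*(x - r)^2 := by
      rw [hDxdef, hnumdef]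
      linear_combination (-2*x)*hsx2 + (-2*x)*hsr2 + (2*x)*(hΔ x) + (-2*x)*(hΔ r)
    have hcross : (sx - sr)*(sx + sr) = (x - r)*(x + r - 2*M) := by
      linear_combination hsx2 - hsr2 + hΔ x - hΔ r
    have h2 : ((sx - sr)*(sx + sr))^2 = ((x - r)*(x + r - 2*M))^2 := by rw [hcross]
    have hgaps : (Dx - num) * (sx + sr)^2
        = 2*(x - r)^2*(x*(x + r - 2*M)^2 - M*(sx + sr)^2) := by
      rw [hgap]; linear_combination (2*x)*h2
    have hs2 : 0 < (sx + sr)^2 := by positivity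
    have hTs : (sx + sr)^2 < (x + r - 2*M)^2 := by
      apply sq_lt_sq' _ hslt; linarith
    have hbr : 0 < x*(x + r - 2*M)^2 - M*(sx + sr)^2 := by
      have e1 : M*(sx + sr)^2 < x*(sx + sr)^2 := by
        exact mul_lt_mul_of_pos_right hxM hs2
      have e2 : x*(sx + sr)^2 ≤ x*(x + r - 2*M)^2 :=
        mul_le_mul_of_nonneg_left hTs.le hx0.le
      linarith
    have h3 : 0 ≤ (Dx - num) * (sx + sr)^2 := by
      rw [hgaps]
      exact mul_nonneg (mul_nonneg (by norm_num) (sq_nonneg _)) hbr.le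
    have hgapnn : 0 ≤ Dx - num := nonneg_of_mul_nonneg_right (by linarith [mul_comm (Dx - num) ((sx + sr)^2)] : 0 ≤ (sx + sr)^2 * (Dx - num)) hs2
    have hnum0 : 0 < num := by positivity
    have hDx0 : 0 < Dx := by linarith
    have hhx : h x = num / Dx := by rw [hh x, hmul]
    refine ⟨by rw [hhx]; positivity, ?_, ?_⟩
    · rw [hhx, div_le_one hDx0]; linarith
    · rw [hhx, div_eq_one_iff_eq hDx0.ne']
      constructor
      · intro hnd
        have hz : 2*(x - r)^2*(x*(x + r - 2*M)^2 - M*(sx + sr)^2) = 0 := by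
          rw [← hgaps, hnd]; ring
        have : (x - r)^2 = 0 := by
          rcases mul_eq_zero.mp hz with h' | h'
          · rcases mul_eq_zero.mp h' with h'' | h''
            · norm_num at h''
            · exact h''
          · exact absurd h' hbr.ne'
        have := pow_eq_zero_iff (n := 2) (by norm_num) |>.mp this
        linarith
      · intro hxr
        subst hxr
        have hsxsr : sx = sr := by rw [hsxdef, hsrdef]
        have : Dx - num = 0 := by rw [hgap, hsxsr]; ring
        linarith
  exact ⟨(main r hr).2.2.mpr rfl, fun x hx => main x hx⟩
end

section
/- Suppose |f(r)| > 1. Then the function ψ ↦ arcsin(h(x(ψ))) is infinitely differentiable (C^∞) on all of ℝ, and takes values in the open interval (0, π/2). -/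
lemma aux_pos (M a l Q : ℝ) (hsub : 0 < M^2 - a^2 + l^2 - Q^2)
    {x : ℝ} (hx : M + Real.sqrt (M^2 - a^2 + l^2 - Q^2) < x) :
    0 < x^2 - 2*M*x + a^2 - l^2 + Q^2 := by
  nlinarith [Real.sq_sqrt hsub.le, Real.sqrt_nonneg (M^2 - a^2 + l^2 - Q^2)]

lemma aux_deriv (M a l Q θ : ℝ) (hM : 0 < M) (ha : 0 < a)
    (hsub : 0 < M^2 - a^2 + l^2 - Q^2) (hθ1 : 0 < θ) (hθ2 : θ < Real.pi)
    {x : ℝ} (hx : M + Real.sqrt (M^2 - a^2 + l^2 - Q^2) < x) :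
    ∃ d : ℝ, d ≠ 0 ∧ HasDerivAt (fun y : ℝ =>
      ((2*y - 2*M) * (y^2 + (l + a*Real.cos θ)^2) - 4*y*(y^2 - 2*M*y + a^2 - l^2 + Q^2)) /
        (4*a*y*Real.sqrt (y^2 - 2*M*y + a^2 - l^2 + Q^2) * Real.sin θ)) d x := by
  have hΔ : 0 < x^2 - 2*M*x + a^2 - l^2 + Q^2 := aux_pos M a l Q hsub hx
  have hxM : M < x := by nlinarith [Real.sqrt_nonneg (M^2 - a^2 + l^2 - Q^2)]
  have hx0 : 0 < x := lt_trans hM hxM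
  have hS : 0 < Real.sin θ := Real.sin_pos_of_pos_of_lt_pi hθ1 hθ2
  set c : ℝ := l + a*Real.cos θ with hc
  set t : ℝ := Real.sqrt (x^2 - 2*M*x + a^2 - l^2 + Q^2) with ht
  have ht0 : 0 < t := Real.sqrt_pos.2 hΔ
  have ht2 : t^2 = x^2 - 2*M*x + a^2 - l^2 + Q^2 := Real.sq_sqrt hΔ.le
  -- pieces
  have hΔd : HasDerivAt (fun y : ℝ => y^2 - 2*M*y + a^2 - l^2 + Q^2) (2*x - 2*M) x := by
    have h1 : HasDerivAt (fun y : ℝ => y^2) (2*x) x := by simpa using hasDerivAt_pow 2 x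
    have h2 : HasDerivAt (fun y : ℝ => 2*M*y) (2*M) x := by
      simpa using (hasDerivAt_id x).const_mul (2*M)
    simpa using (((h1.sub h2).add_const (a^2)).sub_const (l^2)).add_const (Q^2)
  have hsqd : HasDerivAt (fun y : ℝ => Real.sqrt (y^2 - 2*M*y + a^2 - l^2 + Q^2))
      ((2*x - 2*M) / (2*t)) x := hΔd.sqrt hΔ.ne'
  have h2y : HasDerivAt (fun y : ℝ => 2*y - 2*M) 2 x := by
    simpa using ((hasDerivAt_id x).const_mul 2).sub_const (2*M)
  have hy2c : HasDerivAt (fun y : ℝ => y^2 + c^2) (2*x) x := by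
    simpa using (hasDerivAt_pow 2 x).add_const (c^2)
  have h4y : HasDerivAt (fun y : ℝ => 4*y) 4 x := by
    simpa using (hasDerivAt_id x).const_mul (4:ℝ)
  have h4ay : HasDerivAt (fun y : ℝ => 4*a*y) (4*a) x := by
    simpa using (hasDerivAt_id x).const_mul (4*a)
  have hnum : HasDerivAt (fun y : ℝ =>
      (2*y - 2*M) * (y^2 + c^2) - 4*y*(y^2 - 2*M*y + a^2 - l^2 + Q^2))
      (2 * (x^2 + c^2) + (2*x - 2*M) * (2*x) -
        (4 * (x^2 - 2*M*x + a^2 - l^2 + Q^2) + 4*x*(2*x - 2*M))) x :=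
    (h2y.mul hy2c).sub (h4y.mul hΔd)
  have hden : HasDerivAt (fun y : ℝ => 4*a*y*Real.sqrt (y^2 - 2*M*y + a^2 - l^2 + Q^2) * Real.sin θ)
      ((4*a*Real.sqrt (x^2 - 2*M*x + a^2 - l^2 + Q^2) + 4*a*x*((2*x - 2*M) / (2*t))) * Real.sin θ) x :=
    (h4ay.mul hsqd).mul_const (Real.sin θ)
  have hdenx : 4*a*x*Real.sqrt (x^2 - 2*M*x + a^2 - l^2 + Q^2) * Real.sin θ ≠ 0 := by
    rw [← ht]; positivity
  have hF := hnum.div hden hdenx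
  refine ⟨_, ?_, hF⟩
  rw [div_ne_zero_iff]
  constructor
  · -- numerator of quotient rule is negative
    rw [← ht]
    apply ne_of_lt
    have key : ((2 * (x^2 + c^2) + (2*x - 2*M) * (2*x) -
        (4 * (x^2 - 2*M*x + a^2 - l^2 + Q^2) + 4*x*(2*x - 2*M))) *
          (4*a*x*t * Real.sin θ) -
        ((2*x - 2*M) * (x^2 + c^2) - 4*x*(x^2 - 2*M*x + a^2 - l^2 + Q^2)) *
          ((4*a*t + 4*a*x*((2*x - 2*M) / (2*t))) * Real.sin θ)) * t =
        4*a*Real.sin θ * (-2*(x^2 + c^2)*((x - M)^3 + M*(M^2 - a^2 + l^2 - Q^2))) := by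
      field_simp
      linear_combination ((x*(2 * (x ^ 2 + c ^ 2) + (2 * x - 2 * M) * (2 * x) -
        (4 * (x ^ 2 - 2 * M * x + a ^ 2 - l ^ 2 + Q ^ 2) + 4 * x * (2 * x - 2 * M))) -
        ((2 * x - 2 * M) * (x ^ 2 + c ^ 2) - 4 * x * (x ^ 2 - 2 * M * x + a ^ 2 - l ^ 2 + Q ^ 2)))) * ht2
    have hP : 4*a*Real.sin θ * (-2*(x^2 + c^2)*((x - M)^3 + M*(M^2 - a^2 + l^2 - Q^2))) < 0 := by
      have h1 : 0 < (x - M)^3 + M*(M^2 - a^2 + l^2 - Q^2) :=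
        add_pos (pow_pos (sub_pos.2 hxM) 3) (mul_pos hM hsub)
      have h3 : 0 < 4*a*Real.sin θ * (2*(x^2 + c^2)*((x - M)^3 + M*(M^2 - a^2 + l^2 - Q^2))) :=
        mul_pos (by positivity) (mul_pos (by positivity) h1)
      rw [show 4*a*Real.sin θ * (-2*(x^2 + c^2)*((x - M)^3 + M*(M^2 - a^2 + l^2 - Q^2))) =
        -(4*a*Real.sin θ * (2*(x^2 + c^2)*((x - M)^3 + M*(M^2 - a^2 + l^2 - Q^2)))) from by ring]
      exact neg_lt_zero.2 h3
    have hEt : _ * t < 0 := key ▸ hP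
    have h4 := div_neg_of_neg_of_pos hEt ht0
    rwa [mul_div_cancel_right₀ _ ht0.ne'] at h4
  · positivity

lemma aux_cd (M a l Q θ : ℝ) (ha : 0 < a)
    (hsub : 0 < M^2 - a^2 + l^2 - Q^2) (hθ1 : 0 < θ) (hθ2 : θ < Real.pi) (hM : 0 < M)
    {x : ℝ} (hx : M + Real.sqrt (M^2 - a^2 + l^2 - Q^2) < x) :
    ContDiffAt ℝ (⊤ : ℕ∞) (fun y : ℝ =>
      ((2*y - 2*M) * (y^2 + (l + a*Real.cos θ)^2) - 4*y*(y^2 - 2*M*y + a^2 - l^2 + Q^2)) /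
        (4*a*y*Real.sqrt (y^2 - 2*M*y + a^2 - l^2 + Q^2) * Real.sin θ)) x := by
  have hΔ : 0 < x^2 - 2*M*x + a^2 - l^2 + Q^2 := aux_pos M a l Q hsub hx
  have hxM : M < x := by nlinarith [Real.sqrt_nonneg (M^2 - a^2 + l^2 - Q^2)]
  have hx0 : 0 < x := lt_trans hM hxM
  have hS : 0 < Real.sin θ := Real.sin_pos_of_pos_of_lt_pi hθ1 hθ2
  have hnum : ContDiffAt ℝ (⊤ : ℕ∞) (fun y : ℝ =>
      (2*y - 2*M) * (y^2 + (l + a*Real.cos θ)^2) - 4*y*(y^2 - 2*M*y + a^2 - l^2 + Q^2)) x := by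
    fun_prop
  have hpoly : ContDiffAt ℝ (⊤ : ℕ∞) (fun y : ℝ => y^2 - 2*M*y + a^2 - l^2 + Q^2) x := by fun_prop
  have hsq : ContDiffAt ℝ (⊤ : ℕ∞) (fun y : ℝ => Real.sqrt (y^2 - 2*M*y + a^2 - l^2 + Q^2)) x :=
    hpoly.sqrt hΔ.ne'
  have hden : ContDiffAt ℝ (⊤ : ℕ∞) (fun y : ℝ =>
      4*a*y*Real.sqrt (y^2 - 2*M*y + a^2 - l^2 + Q^2) * Real.sin θ) x := by
    exact (((contDiffAt_const.mul contDiffAt_id).mul hsq).mul contDiffAt_const)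
  exact hnum.div hden (by positivity)

lemma aux_cdh (M a l Q r : ℝ)
    (hsub : 0 < M^2 - a^2 + l^2 - Q^2) (hM : 0 < M)
    (hr : M + Real.sqrt (M^2 - a^2 + l^2 - Q^2) < r)
    {x : ℝ} (hx : M + Real.sqrt (M^2 - a^2 + l^2 - Q^2) < x)
    (hden : (2*x - 2*M)*(r^2 - x^2) + 4*x*(x^2 - 2*M*x + a^2 - l^2 + Q^2) ≠ 0) :
    ContDiffAt ℝ (⊤ : ℕ∞) (fun y : ℝ =>
      4*y*Real.sqrt ((r^2 - 2*M*r + a^2 - l^2 + Q^2) * (y^2 - 2*M*y + a^2 - l^2 + Q^2)) /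
        ((2*y - 2*M)*(r^2 - y^2) + 4*y*(y^2 - 2*M*y + a^2 - l^2 + Q^2))) x := by
  have hΔx : 0 < x^2 - 2*M*x + a^2 - l^2 + Q^2 := aux_pos M a l Q hsub hx
  have hΔr : 0 < r^2 - 2*M*r + a^2 - l^2 + Q^2 := aux_pos M a l Q hsub hr
  have hsq : ContDiffAt ℝ (⊤ : ℕ∞) (fun y : ℝ =>
      Real.sqrt ((r^2 - 2*M*r + a^2 - l^2 + Q^2) * (y^2 - 2*M*y + a^2 - l^2 + Q^2))) x := by
    have hpoly : ContDiffAt ℝ (⊤ : ℕ∞)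
        (fun y : ℝ => (r^2 - 2*M*r + a^2 - l^2 + Q^2) * (y^2 - 2*M*y + a^2 - l^2 + Q^2)) x := by
      fun_prop
    exact hpoly.sqrt (by positivity)
  have hnum : ContDiffAt ℝ (⊤ : ℕ∞) (fun y : ℝ =>
      4*y*Real.sqrt ((r^2 - 2*M*r + a^2 - l^2 + Q^2) * (y^2 - 2*M*y + a^2 - l^2 + Q^2))) x :=
    (contDiffAt_const.mul contDiffAt_id).mul hsq
  have hdenc : ContDiffAt ℝ (⊤ : ℕ∞) (fun y : ℝ =>
      (2*y - 2*M)*(r^2 - y^2) + 4*y*(y^2 - 2*M*y + a^2 - l^2 + Q^2)) x := by fun_prop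
  exact hnum.div hdenc hden

theorem stmt_11 (M a l Q θ rp r : ℝ) (Δ f h X : ℝ → ℝ)
    (hM : 0 < M) (ha : 0 < a) (hsub : 0 < M^2 - a^2 + l^2 - Q^2)
    (hθ : θ ∈ Set.Ioo 0 Real.pi)
    (hΔ : ∀ x, Δ x = x^2 - 2*M*x + a^2 - l^2 + Q^2)
    (hrp : rp = M + Real.sqrt (M^2 - a^2 + l^2 - Q^2))
    (hf : ∀ x, f x = ((2*x - 2*M) * (x^2 + (l + a*Real.cos θ)^2) - 4*x*Δ x) /
        (4*a*x*Real.sqrt (Δ x) * Real.sin θ))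
    (hanti : StrictAntiOn f (Set.Ioi rp))
    (hbij : Set.BijOn f (Set.Ioi rp) Set.univ)
    (hXmem : ∀ ψ, X ψ ∈ Set.Ioi rp) (hXeq : ∀ ψ, f (X ψ) = Real.sin ψ)
    (hr : rp < r)
    (hh : ∀ x, h x = 4*x*Real.sqrt (Δ r * Δ x) /
        ((2*x - 2*M)*(r^2 - x^2) + 4*x*Δ x))
    (hhval : ∀ x ∈ Set.Ioi rp, 0 < h x ∧ h x ≤ 1 ∧ (h x = 1 ↔ x = r))
    (hfr : 1 < |f r|) :
    ContDiff ℝ (⊤ : ℕ∞) (fun ψ => Real.arcsin (h (X ψ))) ∧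
      ∀ ψ : ℝ, Real.arcsin (h (X ψ)) ∈ Set.Ioo 0 (Real.pi/2) := by
  have hfeq : f = fun y : ℝ =>
      ((2*y - 2*M) * (y^2 + (l + a*Real.cos θ)^2) - 4*y*(y^2 - 2*M*y + a^2 - l^2 + Q^2)) /
        (4*a*y*Real.sqrt (y^2 - 2*M*y + a^2 - l^2 + Q^2) * Real.sin θ) :=
    funext fun y => by rw [hf y, hΔ y]
  have hheq : h = fun y : ℝ =>
      4*y*Real.sqrt ((r^2 - 2*M*r + a^2 - l^2 + Q^2) * (y^2 - 2*M*y + a^2 - l^2 + Q^2)) /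
        ((2*y - 2*M)*(r^2 - y^2) + 4*y*(y^2 - 2*M*y + a^2 - l^2 + Q^2)) :=
    funext fun y => by rw [hh y, hΔ y, hΔ r]
  -- basic facts about each X ψ
  have hXr : ∀ ψ, X ψ ≠ r := by
    intro ψ he
    have h1 : f r = Real.sin ψ := he ▸ hXeq ψ
    have := Real.abs_sin_le_one ψ
    rw [h1] at hfr; linarith
  have hh01 : ∀ ψ, 0 < h (X ψ) ∧ h (X ψ) < 1 := by
    intro ψ
    obtain ⟨h1, h2, h3⟩ := hhval (X ψ) (hXmem ψ)
    exact ⟨h1, lt_of_le_of_ne h2 fun he => hXr ψ (h3.1 he)⟩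
  -- h contDiffAt each X ψ
  have hdenne : ∀ ψ, (2*(X ψ) - 2*M)*(r^2 - (X ψ)^2) +
      4*(X ψ)*((X ψ)^2 - 2*M*(X ψ) + a^2 - l^2 + Q^2) ≠ 0 := by
    intro ψ hd
    have h0 := (hh01 ψ).1
    rw [hh (X ψ), hΔ (X ψ)] at h0
    rw [hd] at h0
    simp at h0
  have hcdh : ∀ ψ, ContDiffAt ℝ (⊤ : ℕ∞) h (X ψ) := by
    intro ψ
    rw [hheq]
    exact aux_cdh M a l Q r hsub hM (hrp ▸ hr) (hrp ▸ hXmem ψ) (hdenne ψ)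
  -- X is ContDiffAt everywhere
  have hXcd : ∀ ψ, ContDiffAt ℝ (⊤ : ℕ∞) X ψ := by
    intro ψ₀
    set x₀ := X ψ₀ with hx₀def
    have hx₀ : x₀ ∈ Set.Ioi rp := hXmem ψ₀
    have hx₀' : M + Real.sqrt (M^2 - a^2 + l^2 - Q^2) < x₀ := hrp ▸ hx₀
    obtain ⟨d, hd0, hdF⟩ := aux_deriv M a l Q θ hM ha hsub hθ.1 hθ.2 hx₀'
    have hdf : HasDerivAt f d x₀ := hfeq ▸ hdF
    have hcd : ContDiffAt ℝ (⊤ : ℕ∞) f x₀ := hfeq ▸ aux_cd M a l Q θ ha hsub hθ.1 hθ.2 hM hx₀'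
    have hfd := hdf.hasFDerivAt_equiv hd0
    have hst : HasStrictFDerivAt f
        (↑((ContinuousLinearEquiv.unitsEquivAut ℝ) (Units.mk0 d hd0))) x₀ :=
      hcd.hasStrictFDerivAt' hfd (by simp)
    set g := hcd.localInverse hfd (by simp) with hgdef
    have hg1 : g (f x₀) = x₀ := hcd.localInverse_apply_image hfd (by simp)
    have hgs : ContDiffAt ℝ (⊤ : ℕ∞) g (f x₀) := hcd.to_localInverse hfd (by simp)
    have hrInv : ∀ᶠ y in nhds (f x₀), f (g y) = y := hst.eventually_right_inverse
    have hmem : ∀ᶠ y in nhds (f x₀), g y ∈ Set.Ioi rp := by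
      apply hgs.continuousAt.eventually_mem
      rw [hg1]
      exact isOpen_Ioi.mem_nhds hx₀
    have hsinc : Filter.Tendsto Real.sin (nhds ψ₀) (nhds (f x₀)) := by
      rw [hx₀def, hXeq ψ₀]
      exact Real.continuous_sin.continuousAt
    have hev : ∀ᶠ ψ in nhds ψ₀, f (g (Real.sin ψ)) = Real.sin ψ ∧ g (Real.sin ψ) ∈ Set.Ioi rp :=
      hsinc.eventually (hrInv.and hmem)
    have hXg : X =ᶠ[nhds ψ₀] fun ψ => g (Real.sin ψ) := by
      filter_upwards [hev] with ψ hψ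
      exact (hbij.injOn hψ.2 (hXmem ψ) (by rw [hψ.1, hXeq ψ])).symm
    have hcomp : ContDiffAt ℝ (⊤ : ℕ∞) (fun ψ => g (Real.sin ψ)) ψ₀ := by
      have hgs' : ContDiffAt ℝ (⊤ : ℕ∞) g (Real.sin ψ₀) := by rwa [hXeq ψ₀] at hgs
      exact hgs'.comp ψ₀ Real.contDiff_sin.contDiffAt
    exact hcomp.congr_of_eventuallyEq hXg
  constructor
  · rw [contDiff_iff_contDiffAt]
    intro ψ
    have h01 := hh01 ψ
    have harc : ContDiffAt ℝ (⊤ : ℕ∞) Real.arcsin (h (X ψ)) :=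
      Real.contDiffAt_arcsin (by linarith [h01.1]) (ne_of_lt h01.2)
    exact ContDiffAt.comp (g := Real.arcsin) (f := h ∘ X) ψ harc ((hcdh ψ).comp ψ (hXcd ψ))
  · intro ψ
    have h01 := hh01 ψ
    exact ⟨Real.arcsin_pos.2 h01.1, Real.arcsin_lt_pi_div_two.2 h01.2⟩
end

section
/- Suppose |f(r)| < 1 and set ψ₀ = π − arcsin(f(r)). Define ρ₃ : [π/2, 3π/2] → ℝ by ρ₃(ψ) = arcsin(h(x(ψ))) for ψ ∈ [π/2, ψ₀] and ρ₃(ψ) = π − arcsin(h(x(ψ))) for ψ ∈ (ψ₀, 3π/2]. Then ρ₃ is infinitely differentiable (C^∞) on the interval [π/2, 3π/2]. -/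
open Real Set Filter Topology

set_option maxHeartbeats 1000000 in
theorem stmt_13 (M a l Q θ rp r : ℝ) (Δ f h X : ℝ → ℝ)
    (hM : 0 < M) (ha : 0 < a) (hsub : 0 < M^2 - a^2 + l^2 - Q^2)
    (hθ : θ ∈ Set.Ioo 0 Real.pi)
    (hΔ : ∀ x, Δ x = x^2 - 2*M*x + a^2 - l^2 + Q^2)
    (hrp : rp = M + Real.sqrt (M^2 - a^2 + l^2 - Q^2))
    (hf : ∀ x, f x = ((2*x - 2*M) * (x^2 + (l + a*Real.cos θ)^2) - 4*x*Δ x) /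
        (4*a*x*Real.sqrt (Δ x) * Real.sin θ))
    (hanti : StrictAntiOn f (Set.Ioi rp))
    (hbij : Set.BijOn f (Set.Ioi rp) Set.univ)
    (hXmem : ∀ ψ, X ψ ∈ Set.Ioi rp) (hXeq : ∀ ψ, f (X ψ) = Real.sin ψ)
    (hr : rp < r)
    (hh : ∀ x, h x = 4*x*Real.sqrt (Δ r * Δ x) /
        ((2*x - 2*M)*(r^2 - x^2) + 4*x*Δ x))
    (hhval : ∀ x ∈ Set.Ioi rp, 0 < h x ∧ h x ≤ 1 ∧ (h x = 1 ↔ x = r))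
    (hfr : |f r| < 1) (ψ₀ : ℝ) (hψ₀ : ψ₀ = Real.pi - Real.arcsin (f r))
    (ρ₃ : ℝ → ℝ)
    (hρ₃ : ∀ ψ, ρ₃ ψ = if ψ ≤ ψ₀ then Real.arcsin (h (X ψ))
        else Real.pi - Real.arcsin (h (X ψ))) :
    ContDiffOn ℝ (⊤ : ℕ∞) ρ₃ (Set.Icc (Real.pi/2) (3*Real.pi/2)) := by
  obtain ⟨hθ1, hθ2⟩ := hθ
  have hsθ : 0 < Real.sin θ := Real.sin_pos_of_pos_of_lt_pi hθ1 hθ2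
  have hs0 : 0 < Real.sqrt (M^2 - a^2 + l^2 - Q^2) := Real.sqrt_pos.2 hsub
  have hMrp : M < rp := by rw [hrp]; linarith
  have hrp0 : 0 < rp := hM.trans hMrp
  have hsq0 : Real.sqrt (M^2 - a^2 + l^2 - Q^2) ^ 2 = M^2 - a^2 + l^2 - Q^2 :=
    Real.sq_sqrt hsub.le
  have hΔpos : ∀ x, rp < x → 0 < x^2 - 2*M*x + a^2 - l^2 + Q^2 := by
    intro x hx
    have h1 : Real.sqrt (M^2 - a^2 + l^2 - Q^2) < x - M := by rw [hrp] at hx; linarith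
    nlinarith [hs0, hsq0]
  have hΔpos' : ∀ x, rp < x → 0 < Δ x := by
    intro x hx; rw [hΔ]; exact hΔpos x hx
  have hΔrpos : 0 < Δ r := hΔpos' r hr
  -- explicit form of f
  have hfun : f = fun y : ℝ =>
      ((2*y - 2*M) * (y^2 + (l + a*Real.cos θ)^2) - 4*y*(y^2 - 2*M*y + a^2 - l^2 + Q^2)) /
        (4*a*y*Real.sqrt (y^2 - 2*M*y + a^2 - l^2 + Q^2) * Real.sin θ) := by
    funext y; rw [hf y, hΔ y]
  -- smoothness of f
  have hfCD : ∀ x, rp < x → ContDiffAt ℝ (⊤ : ℕ∞) f x := by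
    intro x₀ hx₀
    have hΔp := hΔpos x₀ hx₀
    have hx0 : 0 < x₀ := hrp0.trans hx₀
    rw [hfun]
    have hpolyCD : ContDiffAt ℝ (⊤ : ℕ∞) (fun y : ℝ => y^2 - 2*M*y + a^2 - l^2 + Q^2) x₀ := by fun_prop
    have hsqCD : ContDiffAt ℝ (⊤ : ℕ∞) (fun y : ℝ => Real.sqrt (y^2 - 2*M*y + a^2 - l^2 + Q^2)) x₀ :=
      hpolyCD.sqrt hΔp.ne'
    have hnumCD : ContDiffAt ℝ (⊤ : ℕ∞) (fun y : ℝ =>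
        (2*y - 2*M) * (y^2 + (l + a*Real.cos θ)^2) - 4*y*(y^2 - 2*M*y + a^2 - l^2 + Q^2)) x₀ := by
      fun_prop
    have hdenCD : ContDiffAt ℝ (⊤ : ℕ∞) (fun y : ℝ =>
        4*a*y*Real.sqrt (y^2 - 2*M*y + a^2 - l^2 + Q^2) * Real.sin θ) x₀ :=
      ((contDiffAt_const.mul contDiffAt_id).mul hsqCD).mul contDiffAt_const
    have hdne : 4*a*x₀*Real.sqrt (x₀^2 - 2*M*x₀ + a^2 - l^2 + Q^2) * Real.sin θ ≠ 0 := by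
      have : 0 < Real.sqrt (x₀^2 - 2*M*x₀ + a^2 - l^2 + Q^2) := Real.sqrt_pos.2 hΔp
      positivity
    exact hnumCD.div hdenCD hdne
  -- derivative of f is negative
  have hfD : ∀ x, rp < x → ∃ m : ℝ, m ≠ 0 ∧ HasDerivAt f m x := by
    intro x₀ hx₀
    have hΔp := hΔpos x₀ hx₀
    have hx0 : 0 < x₀ := hrp0.trans hx₀
    have hMx : M < x₀ := hMrp.trans hx₀
    set c : ℝ := l + a*Real.cos θ with hc
    set s : ℝ := Real.sqrt (x₀^2 - 2*M*x₀ + a^2 - l^2 + Q^2) with hsdef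
    have hs : 0 < s := Real.sqrt_pos.2 hΔp
    have hss : s * s = x₀^2 - 2*M*x₀ + a^2 - l^2 + Q^2 := Real.mul_self_sqrt hΔp.le
    have hid := hasDerivAt_id x₀
    have hΔd : HasDerivAt (fun y : ℝ => y^2 - 2*M*y + a^2 - l^2 + Q^2) (2*x₀ - 2*M) x₀ := by
      have h2 := ((((hasDerivAt_pow 2 x₀).sub (hid.const_mul (2*M))).add_const
        (a^2)).sub_const (l^2)).add_const (Q^2)
      refine h2.congr_deriv ?_
      push_cast; ring
    have hA : HasDerivAt (fun y : ℝ => (2*y - 2*M) * (y^2 + c^2))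
        (2 * (x₀^2 + c^2) + (2*x₀ - 2*M) * (2*x₀)) x₀ := by
      have h1 : HasDerivAt (fun y : ℝ => 2*y - 2*M) 2 x₀ := by
        simpa using (hid.const_mul (2:ℝ)).sub_const (2*M)
      have h2 : HasDerivAt (fun y : ℝ => y^2 + c^2) (2*x₀) x₀ := by
        have := (hasDerivAt_pow 2 x₀).add_const (c^2)
        exact this.congr_deriv (by push_cast; ring)
      exact (h1.mul h2).congr_deriv (by ring)
    have hB : HasDerivAt (fun y : ℝ => 4*y*(y^2 - 2*M*y + a^2 - l^2 + Q^2))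
        (4*(x₀^2 - 2*M*x₀ + a^2 - l^2 + Q^2) + 4*x₀*(2*x₀ - 2*M)) x₀ := by
      have h1 : HasDerivAt (fun y : ℝ => 4*y) 4 x₀ := by simpa using hid.const_mul (4:ℝ)
      exact (h1.mul hΔd).congr_deriv (by ring)
    set nd : ℝ := (2 * (x₀^2 + c^2) + (2*x₀ - 2*M) * (2*x₀)) -
        (4*(x₀^2 - 2*M*x₀ + a^2 - l^2 + Q^2) + 4*x₀*(2*x₀ - 2*M)) with hnd
    have hn : HasDerivAt (fun y : ℝ =>
        (2*y - 2*M) * (y^2 + c^2) - 4*y*(y^2 - 2*M*y + a^2 - l^2 + Q^2)) nd x₀ := hA.sub hB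
    have hsq : HasDerivAt (fun y : ℝ => Real.sqrt (y^2 - 2*M*y + a^2 - l^2 + Q^2))
        ((2*x₀ - 2*M) / (2*s)) x₀ := hΔd.sqrt hΔp.ne'
    have h4ay : HasDerivAt (fun y : ℝ => 4*a*y) (4*a) x₀ := by simpa using hid.const_mul (4*a)
    set dd : ℝ := (4*a*s + 4*a*x₀*((2*x₀ - 2*M)/(2*s))) * Real.sin θ with hdd
    have hden : HasDerivAt (fun y : ℝ =>
        4*a*y*Real.sqrt (y^2 - 2*M*y + a^2 - l^2 + Q^2) * Real.sin θ) dd x₀ := by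
      have := (h4ay.mul hsq).mul_const (Real.sin θ)
      exact this.congr_deriv (by rw [hdd, hsdef])
    set D : ℝ := 4*a*x₀*s*Real.sin θ with hD
    have hDpos : 0 < D := by positivity
    have hDne : (4*a*x₀*Real.sqrt (x₀^2 - 2*M*x₀ + a^2 - l^2 + Q^2) * Real.sin θ) ≠ 0 := by
      rw [← hsdef, ← hD]; exact hDpos.ne'
    have hdiv := hn.div hden hDne
    have key : (nd * (4*a*x₀*Real.sqrt (x₀^2 - 2*M*x₀ + a^2 - l^2 + Q^2) * Real.sin θ)
        - ((2*x₀ - 2*M) * (x₀^2 + c^2) - 4*x₀*(x₀^2 - 2*M*x₀ + a^2 - l^2 + Q^2)) * dd) * s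
        = -(2*a*Real.sin θ) * ((x₀^2 + c^2) * (4*((x₀ - M)^3 + M*(M^2 - a^2 + l^2 - Q^2)))) := by
      have step : (nd * (4*a*x₀*s*Real.sin θ)
          - ((2*x₀ - 2*M) * (x₀^2 + c^2) - 4*x₀*(x₀^2 - 2*M*x₀ + a^2 - l^2 + Q^2)) * dd) * s
          = nd * 4*a*x₀*Real.sin θ*(s*s)
            - ((2*x₀ - 2*M) * (x₀^2 + c^2) - 4*x₀*(x₀^2 - 2*M*x₀ + a^2 - l^2 + Q^2)) * Real.sin θ
              * (4*a*(s*s) + 2*a*x₀*(2*x₀ - 2*M)) := by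
        rw [hdd]; field_simp; ring
      rw [← hsdef, step, hss, hnd]; ring
    have hZ : 0 < (x₀ - M)^3 + M*(M^2 - a^2 + l^2 - Q^2) := by
      have h1 : 0 < (x₀ - M)^3 := pow_pos (sub_pos.2 hMx) 3
      nlinarith [mul_pos hM hsub]
    have hnum : nd * (4*a*x₀*Real.sqrt (x₀^2 - 2*M*x₀ + a^2 - l^2 + Q^2) * Real.sin θ)
        - ((2*x₀ - 2*M) * (x₀^2 + c^2) - 4*x₀*(x₀^2 - 2*M*x₀ + a^2 - l^2 + Q^2)) * dd
        = (-(2*a*Real.sin θ) *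
            ((x₀^2 + c^2) * (4*((x₀ - M)^3 + M*(M^2 - a^2 + l^2 - Q^2))))) / s :=
      (eq_div_iff hs.ne').2 key
    have hK : 0 < x₀^2 + c^2 := by positivity
    have hnumneg : nd * (4*a*x₀*Real.sqrt (x₀^2 - 2*M*x₀ + a^2 - l^2 + Q^2) * Real.sin θ)
        - ((2*x₀ - 2*M) * (x₀^2 + c^2) - 4*x₀*(x₀^2 - 2*M*x₀ + a^2 - l^2 + Q^2)) * dd < 0 := by
      rw [hnum]
      apply div_neg_of_neg_of_pos _ hs
      have hpos : 0 < (2*a*Real.sin θ) *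
          ((x₀^2 + c^2) * (4*((x₀ - M)^3 + M*(M^2 - a^2 + l^2 - Q^2)))) :=
        mul_pos (by positivity) (mul_pos hK (by linarith))
      linarith
    have hD2 : 0 < (4*a*x₀*Real.sqrt (x₀^2 - 2*M*x₀ + a^2 - l^2 + Q^2) * Real.sin θ)^2 := by
      rw [← hsdef]; exact pow_pos hDpos 2
    refine ⟨_, (div_neg_of_neg_of_pos hnumneg hD2).ne, ?_⟩
    rw [hfun]
    exact hdiv
  -- X is smooth
  have hXCD : ∀ ψ : ℝ, ContDiffAt ℝ (⊤ : ℕ∞) X ψ := by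
    intro ψ
    obtain ⟨m, hm, hd⟩ := hfD (X ψ) (hXmem ψ)
    have hcd := hfCD (X ψ) (hXmem ψ)
    set e : ℝ ≃L[ℝ] ℝ := ContinuousLinearEquiv.unitsEquivAut ℝ (Units.mk0 m hm) with he
    have hfd : HasFDerivAt f (e : ℝ →L[ℝ] ℝ) (X ψ) := by
      have heq : (e : ℝ →L[ℝ] ℝ) = ContinuousLinearMap.smulRight (1 : ℝ →L[ℝ] ℝ) m := by
        ext
        simp [he, ContinuousLinearEquiv.unitsEquivAut_apply, mul_comm]
      rw [heq]
      exact hd.hasFDerivAt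
    have h1 : ((⊤ : ℕ∞) : WithTop ℕ∞) ≠ 0 := by simp
    set g : ℝ → ℝ := hcd.localInverse hfd h1 with hg
    have hgc : ContDiffAt ℝ (⊤ : ℕ∞) g (Real.sin ψ) := by
      rw [← hXeq ψ]; exact hcd.to_localInverse hfd h1
    have hgsin : g (Real.sin ψ) = X ψ := by
      rw [← hXeq ψ]; exact hcd.localInverse_apply_image hfd h1
    have hrt : ∀ᶠ y in 𝓝 (Real.sin ψ), f (g y) = y := by
      rw [← hXeq ψ]
      exact (hcd.hasStrictFDerivAt' hfd h1).eventually_right_inverse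
    have hmem : ∀ᶠ y in 𝓝 (Real.sin ψ), g y ∈ Set.Ioi rp :=
      hgc.continuousAt.eventually_mem (isOpen_Ioi.mem_nhds (by rw [hgsin]; exact hXmem ψ))
    have hsin_t : Tendsto Real.sin (𝓝 ψ) (𝓝 (Real.sin ψ)) := Real.continuous_sin.continuousAt
    have hev : X =ᶠ[𝓝 ψ] fun ψ' => g (Real.sin ψ') := by
      filter_upwards [hsin_t.eventually (hrt.and hmem)] with ψ' h'
      exact hbij.injOn (hXmem ψ') h'.2 (by rw [hXeq ψ', h'.1])
    exact ((hgc.comp ψ (Real.contDiff_sin.contDiffAt)).congr_of_eventuallyEq hev)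
  -- positivity of the h-denominator
  have hDfpos : ∀ x, rp < x → 0 < (2*x - 2*M)*(r^2 - x^2) + 4*x*Δ x := by
    intro x hx
    have hnum : 0 < 4*x*Real.sqrt (Δ r * Δ x) := by
      have h1 : 0 < Real.sqrt (Δ r * Δ x) := Real.sqrt_pos.2 (mul_pos hΔrpos (hΔpos' x hx))
      have h2 : 0 < x := hrp0.trans hx
      positivity
    have hh0 := (hhval x hx).1
    rw [hh x] at hh0
    rcases lt_trichotomy ((2*x - 2*M)*(r^2 - x^2) + 4*x*Δ x) 0 with hlt | heq0 | hgt
    · exact absurd (div_neg_of_pos_of_neg hnum hlt) (by linarith)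
    · rw [heq0, div_zero] at hh0; linarith
    · exact hgt
  -- comparison from h ≤ 1
  have hle1 : ∀ x, rp < x →
      4*x*Real.sqrt (Δ r * Δ x) ≤ (2*x - 2*M)*(r^2 - x^2) + 4*x*Δ x := by
    intro x hx
    have := (hhval x hx).2.1
    rw [hh x] at this
    exact (div_le_one (hDfpos x hx)).1 this
  have hlt1 : ∀ x, rp < x → x ≠ r →
      4*x*Real.sqrt (Δ r * Δ x) < (2*x - 2*M)*(r^2 - x^2) + 4*x*Δ x := by
    intro x hx hne
    have h2 := (hhval x hx).2.1
    have h3 : h x ≠ 1 := fun hcon => hne ((hhval x hx).2.2.1 hcon)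
    have h4 : h x < 1 := lt_of_le_of_ne h2 h3
    rw [hh x] at h4
    exact (div_lt_one (hDfpos x hx)).1 h4
  have hsqnum : ∀ x, rp < x →
      (4*x*Real.sqrt (Δ r * Δ x))^2 = 16*x^2*(Δ r * Δ x) := by
    intro x hx
    rw [mul_pow, mul_pow, Real.sq_sqrt (mul_pos hΔrpos (hΔpos' x hx)).le]
    ring
  -- polynomial identity:  Df^2 - 16x^2 Δr Δx = (x-r)^2 * P x
  have hNP : ∀ x : ℝ, ((2*x - 2*M)*(r^2 - x^2) + 4*x*Δ x)^2 - 16*x^2*(Δ r * Δ x)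
      = (x - r)^2 * (4*(x^4 + 2*r*x^3 - 6*M*x^3 + r^2*x^2 - 4*M*r*x^2 + 9*M^2*x^2
        - 2*M*r^2*x - 4*M*(a^2 - l^2 + Q^2)*x + 2*M^2*r*x + M^2*r^2)) := by
    intro x
    rw [hΔ x, hΔ r]
    ring
  -- positivity of P on Ioi rp
  have hPpos : ∀ x, rp < x → 0 < 4*(x^4 + 2*r*x^3 - 6*M*x^3 + r^2*x^2 - 4*M*r*x^2 + 9*M^2*x^2
      - 2*M*r^2*x - 4*M*(a^2 - l^2 + Q^2)*x + 2*M^2*r*x + M^2*r^2) := by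
    intro x hx
    rcases eq_or_ne x r with rfl | hne
    · have hPr : 4*(x^4 + 2*x*x^3 - 6*M*x^3 + x^2*x^2 - 4*M*x*x^2 + 9*M^2*x^2
          - 2*M*x^2*x - 4*M*(a^2 - l^2 + Q^2)*x + 2*M^2*x*x + M^2*x^2)
          = 16*x*((x - M)^3 + M*(M^2 - a^2 + l^2 - Q^2)) := by ring
      rw [hPr]
      have hMx : M < x := hMrp.trans hx
      have h1 : 0 < (x - M)^3 := pow_pos (sub_pos.2 hMx) 3
      have h2 : 0 < x := hrp0.trans hx
      nlinarith [mul_pos hM hsub]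
    · have h1 : 0 < ((2*x - 2*M)*(r^2 - x^2) + 4*x*Δ x)^2 - 16*x^2*(Δ r * Δ x) := by
        have ha1 := hlt1 x hx hne
        have ha2 : 0 ≤ 4*x*Real.sqrt (Δ r * Δ x) := by
          have h2 : 0 < x := hrp0.trans hx
          positivity
        nlinarith [hsqnum x hx]
      rw [hNP x] at h1
      by_contra hcon
      push_neg at hcon
      nlinarith [mul_nonneg (sq_nonneg (x - r)) (neg_nonneg.2 hcon)]
  -- the smooth function w with cos (ρ₃ ψ) = w (X ψ)
  set w : ℝ → ℝ := fun x => (r - x) * Real.sqrt (4*(x^4 + 2*r*x^3 - 6*M*x^3 + r^2*x^2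
      - 4*M*r*x^2 + 9*M^2*x^2 - 2*M*r^2*x - 4*M*(a^2 - l^2 + Q^2)*x + 2*M^2*r*x + M^2*r^2))
      / ((2*x - 2*M)*(r^2 - x^2) + 4*x*Δ x) with hw
  have hwCD : ∀ x, rp < x → ContDiffAt ℝ (⊤ : ℕ∞) w x := by
    intro x hx
    rw [hw]
    have hPCD : ContDiffAt ℝ (⊤ : ℕ∞) (fun x : ℝ => 4*(x^4 + 2*r*x^3 - 6*M*x^3 + r^2*x^2
        - 4*M*r*x^2 + 9*M^2*x^2 - 2*M*r^2*x - 4*M*(a^2 - l^2 + Q^2)*x + 2*M^2*r*x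
        + M^2*r^2)) x := by fun_prop
    have hnumCD : ContDiffAt ℝ (⊤ : ℕ∞) (fun x : ℝ => (r - x) * Real.sqrt (4*(x^4 + 2*r*x^3
        - 6*M*x^3 + r^2*x^2 - 4*M*r*x^2 + 9*M^2*x^2 - 2*M*r^2*x - 4*M*(a^2 - l^2 + Q^2)*x
        + 2*M^2*r*x + M^2*r^2))) x :=
      (contDiffAt_const.sub contDiffAt_id).mul (hPCD.sqrt (hPpos x hx).ne')
    have hdenCD : ContDiffAt ℝ (⊤ : ℕ∞) (fun x : ℝ => (2*x - 2*M)*(r^2 - x^2) + 4*x*Δ x) x := by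
      have : (fun x : ℝ => (2*x - 2*M)*(r^2 - x^2) + 4*x*Δ x)
          = fun x : ℝ => (2*x - 2*M)*(r^2 - x^2) + 4*x*(x^2 - 2*M*x + a^2 - l^2 + Q^2) := by
        funext y; rw [hΔ y]
      rw [this]
      fun_prop
    exact hnumCD.div hdenCD (hDfpos x hx).ne'
  -- pythagoras: h x ^ 2 + w x ^ 2 = 1
  have hpyth : ∀ x, rp < x → (h x)^2 + (w x)^2 = 1 := by
    intro x hx
    have hDf := hDfpos x hx
    have e1 : (h x)^2 = 16*x^2*(Δ r * Δ x) / ((2*x - 2*M)*(r^2 - x^2) + 4*x*Δ x)^2 := by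
      rw [hh x, div_pow, hsqnum x hx]
    have e2 : (w x)^2 = ((x - r)^2 * (4*(x^4 + 2*r*x^3 - 6*M*x^3 + r^2*x^2 - 4*M*r*x^2
        + 9*M^2*x^2 - 2*M*r^2*x - 4*M*(a^2 - l^2 + Q^2)*x + 2*M^2*r*x + M^2*r^2)))
        / ((2*x - 2*M)*(r^2 - x^2) + 4*x*Δ x)^2 := by
      rw [hw]
      rw [div_pow, mul_pow, Real.sq_sqrt (hPpos x hx).le]
      congr 1
      ring
    rw [e1, e2, ← add_div, ← hNP x]
    rw [add_sub_cancel, div_self (pow_pos hDf 2).ne']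
  -- |w x| < 1 on Ioi rp
  have hwlt : ∀ x, rp < x → |w x| < 1 := by
    intro x hx
    have h1 := hpyth x hx
    have h2 := (hhval x hx).1
    have : (w x)^2 < 1 := by nlinarith
    exact (sq_lt_one_iff_abs_lt_one (w x)).1 this
  -- arccos ∘ w identities
  have harccos1 : ∀ x, rp < x → x ≤ r → Real.arccos (w x) = Real.arcsin (h x) := by
    intro x hx hxr
    have hh0 := (hhval x hx).1
    have hwnn : 0 ≤ w x := by
      simp only [hw]
      exact div_nonneg (mul_nonneg (by linarith) (Real.sqrt_nonneg _)) (hDfpos x hx).le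
    have hcos : w x = Real.cos (Real.arcsin (h x)) := by
      rw [Real.cos_arcsin]
      have h2 : (w x)^2 = 1 - (h x)^2 := by linarith [hpyth x hx]
      rw [← h2, Real.sqrt_sq hwnn]
    rw [hcos, Real.arccos_cos (Real.arcsin_nonneg.2 hh0.le)
      (le_trans (Real.arcsin_le_pi_div_two _) (by linarith [Real.pi_pos]))]
  have harccos2 : ∀ x, rp < x → r ≤ x →
      Real.arccos (w x) = Real.pi - Real.arcsin (h x) := by
    intro x hx hxr
    have hh0 := (hhval x hx).1
    have hwnp : w x ≤ 0 := by
      simp only [hw]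
      exact div_nonpos_of_nonpos_of_nonneg
        (mul_nonpos_of_nonpos_of_nonneg (by linarith) (Real.sqrt_nonneg _)) (hDfpos x hx).le
    have hcos : w x = Real.cos (Real.pi - Real.arcsin (h x)) := by
      rw [Real.cos_pi_sub, Real.cos_arcsin]
      have h2 : (-w x)^2 = 1 - (h x)^2 := by nlinarith [hpyth x hx]
      rw [← h2, Real.sqrt_sq (by linarith)]
      ring
    rw [hcos, Real.arccos_cos (by linarith [Real.arcsin_le_pi_div_two (h x), Real.pi_pos])
      (by linarith [Real.arcsin_nonneg.2 hh0.le])]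
  -- sin is strictly decreasing on the interval
  have hsanti : StrictAntiOn Real.sin (Set.Icc (Real.pi/2) (3*Real.pi/2)) := by
    intro u hu v hv huv
    rw [← Real.cos_sub_pi_div_two u, ← Real.cos_sub_pi_div_two v]
    exact Real.strictAntiOn_cos ⟨by linarith [hu.1], by linarith [hu.2]⟩
      ⟨by linarith [hv.1], by linarith [hv.2]⟩ (by linarith)
  -- ψ₀ facts
  have hfr1 := abs_lt.1 hfr
  have hψ₀mem : ψ₀ ∈ Set.Icc (Real.pi/2) (3*Real.pi/2) := by
    rw [hψ₀]
    constructor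
    · linarith [Real.arcsin_le_pi_div_two (f r)]
    · linarith [Real.neg_pi_div_two_le_arcsin (f r)]
  have hsψ₀ : Real.sin ψ₀ = f r := by
    rw [hψ₀, Real.sin_pi_sub, Real.sin_arcsin hfr1.1.le hfr1.2.le]
  -- branch facts
  have hXle : ∀ ψ ∈ Set.Icc (Real.pi/2) (3*Real.pi/2), ψ ≤ ψ₀ → X ψ ≤ r := by
    intro ψ hψmem hle
    have h1 : f r ≤ f (X ψ) := by
      rw [← hsψ₀, hXeq ψ]
      exact hsanti.antitoneOn hψmem hψ₀mem hle
    by_contra hcon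
    push_neg at hcon
    exact absurd (hanti (Set.mem_Ioi.2 hr) (hXmem ψ) hcon) (by linarith)
  have hXge : ∀ ψ ∈ Set.Icc (Real.pi/2) (3*Real.pi/2), ψ₀ < ψ → r ≤ X ψ := by
    intro ψ hψmem hlt
    have h1 : f (X ψ) < f r := by
      rw [← hsψ₀, hXeq ψ]
      exact hsanti hψ₀mem hψmem hlt
    by_contra hcon
    push_neg at hcon
    exact absurd (hanti (hXmem ψ) (Set.mem_Ioi.2 hr) hcon) (by linarith)
  -- main pointwise equality
  have hmain : ∀ ψ ∈ Set.Icc (Real.pi/2) (3*Real.pi/2), ρ₃ ψ = Real.arccos (w (X ψ)) := by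
    intro ψ hψmem
    rw [hρ₃ ψ]
    split_ifs with hcase
    · exact (harccos1 (X ψ) (hXmem ψ) (hXle ψ hψmem hcase)).symm
    · push_neg at hcase
      exact (harccos2 (X ψ) (hXmem ψ) (hXge ψ hψmem hcase)).symm
  -- conclusion
  refine ContDiffOn.congr ?_ hmain
  intro ψ hψmem
  apply ContDiffAt.contDiffWithinAt
  have habs := hwlt (X ψ) (hXmem ψ)
  have harc : ContDiffAt ℝ (⊤ : ℕ∞) Real.arccos (w (X ψ)) :=
    Real.contDiffAt_arccos (by rw [abs_lt] at habs; linarith [habs.1])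
      (by rw [abs_lt] at habs; linarith [habs.2])
  have hcomp := harc.comp ψ ((hwCD (X ψ) (hXmem ψ)).comp ψ (hXCD ψ))
  exact hcomp
end

section
/- Let F : ℝ → ℝ be twice continuously differentiable on a neighborhood of 0 with F(0) = 1, F'(0) = 0, F''(0) < 0, and F(y) < 1 for all y ≠ 0 in that neighborhood. Define g by g(y) = arcsin(F(y)) for y < 0, g(0) = π/2, and g(y) = π − arcsin(F(y)) for y > 0. Then g is differentiable at 0 with derivative g'(0) = √(−F''(0)). -/
/-!
Near `0` we have `g y - π/2 = sign y · arccos (F y)`, so the difference quotient of `g` at `0` is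
`arccos (F y) / |y|`. Writing `t = arccos x`, the identity `sin t = √(1 - x²)` and `sin t / t → 1`
give `arccos x ~ √(1 - x²)` as `x → 1⁻`, while Taylor's formula gives
`1 - F y² = (1 - F y)(1 + F y) ~ -F''(0) y²`. Hence `arccos (F y) / |y| → √(-F''(0))`.
-/

open Real Filter Set Topology

theorem ContDiffAt.tendsto_taylorRemainder_div_sq {f : ℝ → ℝ} {x : ℝ} (hf : ContDiffAt ℝ 2 f x) :
    Tendsto (fun y => (f y - f x - deriv f x * (y - x)) / (y - x) ^ 2) (𝓝[≠] x)
      (𝓝 (deriv (deriv f) x / 2)) := by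
  have hf' : ∀ᶠ y in 𝓝 x, HasDerivAt f (deriv f y) y :=
    (hf.eventually (by simp)).mono fun y hy => (hy.differentiableAt (by simp)).hasDerivAt
  have hf'' : HasDerivAt (deriv f) (deriv (deriv f) x) x := by
    have h := (hf.fderiv_right (m := 1) le_rfl).clm_apply (contDiffAt_const (c := (1 : ℝ)))
    simp only [fderiv_apply_one_eq_deriv] at h
    exact (h.differentiableAt one_ne_zero).hasDerivAt
  refine HasDerivAt.lhopital_zero_nhdsNE (f' := fun y => deriv f y - deriv f x)
    (g' := fun y => 2 * (y - x)) ?_ ?_ ?_ ?_ ?_ ?_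
  · refine (hf'.mono fun y hy => ?_).filter_mono nhdsWithin_le_nhds
    simpa using (hy.sub_const (f x)).fun_sub ((hasDerivAt_id' y).sub_const x |>.const_mul (deriv f x))
  · refine Eventually.of_forall fun y => ?_
    simpa using ((hasDerivAt_id' y).sub_const x).fun_pow 2
  · filter_upwards [self_mem_nhdsWithin] with y hy
    exact mul_ne_zero two_ne_zero (sub_ne_zero.2 hy)
  · refine Tendsto.mono_left ?_ nhdsWithin_le_nhds
    have h := hf.continuousAt.tendsto.sub_const (f x) |>.sub
      ((continuous_sub_right x).tendsto x |>.const_mul (deriv f x))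
    simpa using h
  · refine Tendsto.mono_left ?_ nhdsWithin_le_nhds
    simpa using ((continuous_sub_right x).tendsto x).pow 2
  · rw [hasDerivAt_iff_tendsto_slope] at hf''
    refine (hf''.div_const 2).congr fun y => ?_
    rw [slope_def_field, div_div, mul_comm]

theorem Real.tendsto_arccos_div_sqrt_one_sub_sq :
    Tendsto (fun x => arccos x / √(1 - x ^ 2)) (𝓝[<] 1) (𝓝 1) := by
  have hsinc : Tendsto (fun x => sinc (arccos x)) (𝓝[<] 1) (𝓝 1) := by
    have h := (continuous_sinc.comp continuous_arccos).tendsto 1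
    simpa [Function.comp_def] using h.mono_left nhdsWithin_le_nhds
  have hinv : Tendsto (fun x => (sinc (arccos x))⁻¹) (𝓝[<] 1) (𝓝 1) := by
    simpa using hsinc.inv₀ one_ne_zero
  refine hinv.congr' ?_
  filter_upwards [Ioo_mem_nhdsLT (show (-1 : ℝ) < 1 by norm_num)] with x hx
  rw [sinc_of_ne_zero (arccos_pos.2 hx.2).ne', sin_arccos, inv_div]

theorem tendsto_arccos_div_abs {F : ℝ → ℝ} (hF : ContDiffAt ℝ 2 F 0) (hF0 : F 0 = 1)
    (hF1 : deriv F 0 = 0) (hFlt : ∀ᶠ y in 𝓝[≠] 0, F y < 1) :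
    Tendsto (fun y => arccos (F y) / |y|) (𝓝[≠] 0) (𝓝 √(-deriv (deriv F) 0)) := by
  have hF_lt_one : Tendsto F (𝓝[≠] 0) (𝓝[<] 1) := by
    refine tendsto_nhdsWithin_iff.2 ⟨?_, hFlt⟩
    simpa [hF0] using hF.continuousAt.tendsto.mono_left nhdsWithin_le_nhds
  have hquot : Tendsto (fun y => (1 - F y) / y ^ 2) (𝓝[≠] 0) (𝓝 (-deriv (deriv F) 0 / 2)) := by
    refine (hF.tendsto_taylorRemainder_div_sq.neg.congr fun y => ?_).trans (by rw [neg_div])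
    simp only [hF0, hF1, sub_zero, zero_mul]
    ring
  have hquot_sq : Tendsto (fun y => (1 - F y ^ 2) / y ^ 2) (𝓝[≠] 0) (𝓝 (-deriv (deriv F) 0)) := by
    have h1F : Tendsto (fun y => 1 + F y) (𝓝[≠] 0) (𝓝 2) := by
      simpa [one_add_one_eq_two] using (tendsto_nhds_of_tendsto_nhdsWithin hF_lt_one).const_add 1
    refine ((hquot.mul h1F).congr fun y => ?_).trans (by rw [div_mul_cancel₀ _ two_ne_zero])
    ring
  have hsqrt : Tendsto (fun y => √(1 - F y ^ 2) / |y|) (𝓝[≠] 0) (𝓝 √(-deriv (deriv F) 0)) := by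
    refine (hquot_sq.sqrt).congr fun y => ?_
    rw [sqrt_div' _ (sq_nonneg y), sqrt_sq_eq_abs]
  have hprod := (tendsto_arccos_div_sqrt_one_sub_sq.comp hF_lt_one).mul hsqrt
  rw [one_mul] at hprod
  refine hprod.congr' ?_
  filter_upwards [hF_lt_one (Ioo_mem_nhdsLT (show (-1 : ℝ) < 1 by norm_num))] with y hy
  have hsqrt_pos : 0 < √(1 - F y ^ 2) := sqrt_pos.2 (by nlinarith [hy.1, hy.2])
  simp only [Function.comp_apply]
  rw [div_mul_div_cancel₀ hsqrt_pos.ne']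

theorem slope_arcsin_piecewise {F g : ℝ → ℝ}
    (hg : ∀ y, g y = if y < 0 then arcsin (F y) else if y = 0 then π / 2 else π - arcsin (F y))
    {y : ℝ} (hy : y ≠ 0) : slope g 0 y = arccos (F y) / |y| := by
  rw [slope_def_field, hg, hg, if_neg (lt_irrefl 0), if_pos rfl, sub_zero,
    arcsin_eq_pi_div_two_sub_arccos]
  rcases hy.lt_or_gt with hneg | hpos
  · rw [if_pos hneg, abs_of_neg hneg, div_neg, ← neg_div]
    ring
  · rw [if_neg hpos.not_gt, if_neg hy, abs_of_pos hpos]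
    ring

theorem stmt_14_general (F g : ℝ → ℝ) (s : Set ℝ) (hs : s ∈ nhds (0:ℝ))
    (hF : ContDiffOn ℝ 2 F s) (hF0 : F 0 = 1) (hF1 : deriv F 0 = 0)
    (hFlt : ∀ y ∈ s, y ≠ 0 → F y < 1)
    (hg : ∀ y, g y = if y < 0 then Real.arcsin (F y)
        else if y = 0 then Real.pi/2 else Real.pi - Real.arcsin (F y)) :
    HasDerivAt g (Real.sqrt (-(deriv (deriv F) 0))) 0 := by
  have hFlt' : ∀ᶠ y in 𝓝[≠] 0, F y < 1 := by
    filter_upwards [mem_nhdsWithin_of_mem_nhds hs, self_mem_nhdsWithin] with y hys hy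
    exact hFlt y hys hy
  rw [hasDerivAt_iff_tendsto_slope]
  refine (tendsto_arccos_div_abs (hF.contDiffAt hs) hF0 hF1 hFlt').congr' ?_
  filter_upwards [self_mem_nhdsWithin] with y hy
  exact (slope_arcsin_piecewise hg hy).symm

/-- Appendix: the piecewise function `g` built from `arcsin ∘ F`
is differentiable at `0` with derivative `√(−F''(0))`. -/
theorem stmt_14 (F g : ℝ → ℝ) (s : Set ℝ) (hs : s ∈ nhds (0:ℝ))
    (hF : ContDiffOn ℝ 2 F s) (hF0 : F 0 = 1) (hF1 : deriv F 0 = 0)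
    (hF2 : deriv (deriv F) 0 < 0) (hFlt : ∀ y ∈ s, y ≠ 0 → F y < 1)
    (hg : ∀ y, g y = if y < 0 then Real.arcsin (F y)
        else if y = 0 then Real.pi/2 else Real.pi - Real.arcsin (F y)) :
    HasDerivAt g (Real.sqrt (-(deriv (deriv F) 0))) 0 :=
  stmt_14_general F g s hs hF hF0 hF1 hFlt hg
end

section
/- Let F : ℝ → ℝ be infinitely differentiable (C^∞) with F(0) = 1, F''(0) < 0, and |F(y)| < 1 for all y ≠ 0. Define g : ℝ → ℝ by g(y) = arcsin(F(y)) for y < 0, g(0) = π/2, and g(y) = π − arcsin(F(y)) for y > 0. Then g is infinitely differentiable (C^∞) on a neighborhood of 0. -/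
open Real Filter Set

lemma aux_hasDerivAt_param (ψ : ℝ → ℝ → ℝ) (hψ : ContDiff ℝ (⊤ : ℕ∞) (Function.uncurry ψ))
    (y₀ : ℝ) :
    HasDerivAt (fun y => ∫ t in (0:ℝ)..1, ψ y t)
      (∫ t in (0:ℝ)..1, fderiv ℝ (Function.uncurry ψ) (y₀, t) (1, 0)) y₀ := by
  set ψ' : ℝ → ℝ → ℝ := fun y t => fderiv ℝ (Function.uncurry ψ) (y, t) (1, 0) with hψ'
  have hc' : Continuous (Function.uncurry ψ') := by
    have h1 : Continuous (fderiv ℝ (Function.uncurry ψ)) := hψ.continuous_fderiv (by simp)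
    exact h1.clm_apply continuous_const
  have hc : Continuous (Function.uncurry ψ) := hψ.continuous
  have hK : IsCompact (Metric.closedBall y₀ 1 ×ˢ Set.Icc (0:ℝ) 1) :=
    (isCompact_closedBall y₀ 1).prod isCompact_Icc
  obtain ⟨C, hC⟩ := hK.exists_bound_of_continuousOn hc'.continuousOn
  have hcy : ∀ y, Continuous (ψ y) := fun y => hc.comp (continuous_const.prodMk continuous_id)
  have hcy' : ∀ y, Continuous (ψ' y) := fun y => hc'.comp (continuous_const.prodMk continuous_id)
  refine (intervalIntegral.hasDerivAt_integral_of_dominated_loc_of_deriv_le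
    (μ := MeasureTheory.volume) (a := 0) (b := 1)
    (F := ψ) (F' := ψ') (x₀ := y₀) (bound := fun _ => C)
    (Metric.closedBall_mem_nhds y₀ one_pos)
    (Filter.Eventually.of_forall fun y => (hcy y).aestronglyMeasurable)
    ((hcy y₀).intervalIntegrable 0 1)
    ((hcy' y₀).aestronglyMeasurable)
    (Filter.Eventually.of_forall fun t ht x hx => ?_)
    intervalIntegrable_const
    (Filter.Eventually.of_forall fun t ht x hx => ?_)).2
  · have ht' : t ∈ Set.Ioc (0:ℝ) 1 := by rwa [Set.uIoc_of_le zero_le_one] at ht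
    exact hC (x, t) ⟨hx, Set.Ioc_subset_Icc_self ht'⟩
  · have hd : HasFDerivAt (Function.uncurry ψ) (fderiv ℝ (Function.uncurry ψ) (x, t)) (x, t) :=
      (hψ.differentiable (by simp) (x, t)).hasFDerivAt
    have hl : HasDerivAt (fun y : ℝ => (y, t)) ((1:ℝ), (0:ℝ)) x :=
      (hasDerivAt_id x).prodMk (hasDerivAt_const x t)
    exact hd.comp_hasDerivAt x hl

lemma aux_contDiff_param (n : ℕ) : ∀ ψ : ℝ → ℝ → ℝ,
    ContDiff ℝ (⊤ : ℕ∞) (Function.uncurry ψ) →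
    ContDiff ℝ n (fun y => ∫ t in (0:ℝ)..1, ψ y t) := by
  induction n with
  | zero =>
    intro ψ hψ
    exact contDiff_zero.mpr
      (intervalIntegral.continuous_parametric_intervalIntegral_of_continuous' hψ.continuous 0 1)
  | succ k ih =>
    intro ψ hψ
    have hψ' : ContDiff ℝ (⊤ : ℕ∞)
        (Function.uncurry (fun y t => fderiv ℝ (Function.uncurry ψ) (y, t) (1, 0))) := by
      have h1 : ContDiff ℝ (⊤ : ℕ∞) (fderiv ℝ (Function.uncurry ψ)) :=
        hψ.fderiv_right (m := ((⊤ : ℕ∞) : WithTop ℕ∞)) (le_of_eq rfl)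
      exact h1.clm_apply contDiff_const
    have hder : deriv (fun y => ∫ t in (0:ℝ)..1, ψ y t)
        = fun y => ∫ t in (0:ℝ)..1, fderiv ℝ (Function.uncurry ψ) (y, t) (1, 0) :=
      funext fun y => (aux_hasDerivAt_param ψ hψ y).deriv
    rw [Nat.cast_succ, contDiff_succ_iff_deriv]
    refine ⟨fun y => (aux_hasDerivAt_param ψ hψ y).differentiableAt, by simp, ?_⟩
    rw [hder]; exact ih _ hψ'

lemma aux_hadamard (f : ℝ → ℝ) (hf : ContDiff ℝ (⊤ : ℕ∞) f) (y : ℝ) :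
    f y = f 0 + y * ∫ t in (0:ℝ)..1, deriv f (t * y) := by
  rcases eq_or_ne y 0 with rfl | hy
  · simp
  · rw [intervalIntegral.integral_comp_mul_right (deriv f) hy, zero_mul, one_mul,
      intervalIntegral.integral_deriv_eq_sub (fun x _ => (hf.differentiable (by simp) x))
        ((hf.continuous_deriv (by simp)).intervalIntegrable 0 y), smul_eq_mul,
      ← mul_assoc, mul_inv_cancel₀ hy, one_mul]
    ring

lemma aux_H_smooth (f : ℝ → ℝ) (hf : ContDiff ℝ (⊤ : ℕ∞) f) :
    ContDiff ℝ (⊤ : ℕ∞) (fun y => ∫ t in (0:ℝ)..1, deriv f (t * y)) := by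
  have hf' : ContDiff ℝ (⊤ : ℕ∞) (deriv f) := (contDiff_infty_iff_deriv.mp hf).2
  have hψ : ContDiff ℝ (⊤ : ℕ∞) (Function.uncurry (fun y t : ℝ => deriv f (t * y))) :=
    hf'.comp (contDiff_snd.mul contDiff_fst)
  exact contDiff_infty.mpr fun n => aux_contDiff_param n _ hψ

/-- Appendix: the piecewise function `g` built from `arcsin ∘ F`
is smooth on a neighborhood of `0`. -/
theorem stmt_15 (F g : ℝ → ℝ)
    (hF : ContDiff ℝ (⊤ : ℕ∞) F) (hF0 : F 0 = 1)
    (hF2 : deriv (deriv F) 0 < 0) (hFlt : ∀ y : ℝ, y ≠ 0 → |F y| < 1)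
    (hg : ∀ y, g y = if y < 0 then Real.arcsin (F y)
        else if y = 0 then Real.pi/2 else Real.pi - Real.arcsin (F y)) :
    ∃ u ∈ nhds (0:ℝ), ContDiffOn ℝ (⊤ : ℕ∞) g u := by
  have hFd : Differentiable ℝ F := hF.differentiable (by simp)
  have hFinf : ContDiff ℝ (⊤ : ℕ∞) F := hF.of_le (by simp)
  have hF'cd : ContDiff ℝ (⊤ : ℕ∞) (deriv F) := (contDiff_infty_iff_deriv.mp hFinf).2
  have hF'd : Differentiable ℝ (deriv F) := hF'cd.differentiable (by simp)
  -- F has a local max at 0, so F'(0) = 0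
  have hmax : IsLocalMax F 0 := by
    refine Filter.Eventually.of_forall fun y => ?_
    rcases eq_or_ne y 0 with h | h
    · simp [h]
    · rw [hF0]; exact ((le_abs_self _).trans_lt (hFlt y h)).le
  have hF'0 : deriv F 0 = 0 := hmax.deriv_eq_zero
  -- the function q = 1 - F^2
  set q : ℝ → ℝ := fun y => 1 - F y ^ 2 with hqdef
  have hq0 : q 0 = 0 := by simp [hqdef, hF0]
  have hqpos : ∀ y : ℝ, y ≠ 0 → 0 < q y := by
    intro y hy
    have : F y ^ 2 < 1 := (sq_lt_one_iff_abs_lt_one (F y)).mpr (hFlt y hy)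
    simpa [hqdef] using sub_pos.mpr this
  have hqd : ∀ y, HasDerivAt q (-(2 * F y * deriv F y)) y := by
    intro y
    have h1 : HasDerivAt (fun y => F y ^ 2) ((2:ℕ) * F y ^ (2-1) * deriv F y) y :=
      ((hFd y).hasDerivAt).pow 2
    have h2 := (hasDerivAt_const y (1:ℝ)).sub h1
    refine h2.congr_deriv ?_
    push_cast
    ring
  have hdq : deriv q = fun y => -(2 * F y * deriv F y) := funext fun y => (hqd y).deriv
  have hq'0 : deriv q 0 = 0 := by rw [hdq]; simp [hF'0]
  have hq'' : deriv (deriv q) 0 = -(2 * deriv (deriv F) 0) := by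
    rw [hdq]
    have hd2 : HasDerivAt (deriv F) (deriv (deriv F) 0) 0 :=
      (hF'd 0).hasDerivAt
    have h3 := (((hFd 0).hasDerivAt.const_mul (2:ℝ)).mul hd2).neg
    have h4 : HasDerivAt (fun y => -(2 * F y * deriv F y)) (-(2 * deriv (deriv F) 0)) 0 := by
      refine h3.congr_deriv ?_
      rw [hF0, hF'0]; ring
    exact h4.deriv
  -- Hadamard's lemma, applied twice
  have hqs : ContDiff ℝ (⊤ : ℕ∞) q := contDiff_const.sub (hF.pow 2)
  set H1 : ℝ → ℝ := fun y => ∫ t in (0:ℝ)..1, deriv q (t * y) with hH1def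
  have hH1s : ContDiff ℝ (⊤ : ℕ∞) H1 := aux_H_smooth q hqs
  have hqH1 : ∀ y, q y = y * H1 y := fun y => by
    have := aux_hadamard q hqs y; rw [hq0, zero_add] at this; exact this
  have hH10 : H1 0 = 0 := by simp [hH1def, hq'0]
  set G : ℝ → ℝ := fun y => ∫ t in (0:ℝ)..1, deriv H1 (t * y) with hGdef
  have hGs : ContDiff ℝ (⊤ : ℕ∞) G := aux_H_smooth H1 hH1s
  have hH1G : ∀ y, H1 y = y * G y := fun y => by
    have := aux_hadamard H1 hH1s y; rw [hH10, zero_add] at this; exact this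
  have heq : ∀ᶠ z in nhds (0:ℝ), q z = z ^ 2 * G z :=
    Filter.Eventually.of_forall fun z => by rw [hqH1, hH1G]; ring
  have hG0 : G 0 = deriv H1 0 := by simp [hGdef]
  have hH1d : ∀ y, HasDerivAt H1 (deriv H1 y) y :=
    fun y => ((hH1s.differentiable (by simp)) y).hasDerivAt
  have hdq2 : deriv q = fun y => H1 y + y * deriv H1 y := funext fun y => by
    have : HasDerivAt q (1 * H1 y + y * deriv H1 y) y :=
      ((hasDerivAt_id y).mul (hH1d y)).congr_of_eventuallyEq
        (Filter.Eventually.of_forall fun z => hqH1 z)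
    rw [this.deriv, one_mul]
  have hH1'' : HasDerivAt (deriv H1) (deriv (deriv H1) 0) 0 :=
    ((contDiff_infty_iff_deriv.mp hH1s).2.differentiable (by simp) 0).hasDerivAt
  have hG0val : G 0 = -(deriv (deriv F) 0) := by
    have h5 : HasDerivAt (deriv q) (deriv H1 0 + (1 * deriv H1 0 + 0 * deriv (deriv H1) 0)) 0 := by
      rw [hdq2]; exact (hH1d 0).add ((hasDerivAt_id 0).mul hH1'')
    have h6 := h5.deriv
    rw [hq''] at h6
    simp only [zero_mul, one_mul, add_zero] at h6
    rw [hG0]; linarith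
  have hgev : ∀ᶠ z in nhds (0:ℝ), ContDiffAt ℝ (⊤ : ℕ∞) G z :=
    Filter.Eventually.of_forall fun z => hGs.contDiffAt
  have hga : ContDiffAt ℝ (⊤ : ℕ∞) G 0 := hGs.contDiffAt
  have hG0pos : 0 < G 0 := by rw [hG0val]; linarith
  -- choose a ball where everything is nice
  have hFpos : ∀ᶠ y in nhds (0:ℝ), 0 < F y :=
    ContinuousAt.eventually_lt (continuousAt_const) (hF.continuous.continuousAt (x := 0)) (by rw [hF0]; norm_num)
  have hGpos : ∀ᶠ y in nhds (0:ℝ), 0 < G y :=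
    ContinuousAt.eventually_lt (continuousAt_const) hga.continuousAt hG0pos
  obtain ⟨ε, hε, hball⟩ := Metric.eventually_nhds_iff.mp
    (((heq.and hgev).and (hFpos.and hGpos)))
  refine ⟨Metric.ball 0 ε, Metric.ball_mem_nhds 0 hε, ?_⟩
  -- the smooth model function
  set Φ : ℝ → ℝ := fun y => Real.pi/2 + Real.arcsin (y * Real.sqrt (G y)) with hΦdef
  have hmem : ∀ y ∈ Metric.ball (0:ℝ) ε,
      q y = y ^ 2 * G y ∧ ContDiffAt ℝ (⊤ : ℕ∞) G y ∧ 0 < F y ∧ 0 < G y := by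
    intro y hy
    obtain ⟨⟨h1, h2⟩, h3, h4⟩ := hball (by simpa [Metric.mem_ball] using hy)
    exact ⟨h1, h2, h3, h4⟩
  -- basic facts on the ball
  have hr_sq : ∀ y ∈ Metric.ball (0:ℝ) ε, (y * Real.sqrt (G y)) ^ 2 = 1 - F y ^ 2 := by
    intro y hy
    obtain ⟨h1, _, _, h4⟩ := hmem y hy
    have : (y * Real.sqrt (G y)) ^ 2 = y ^ 2 * G y := by
      rw [mul_pow, Real.sq_sqrt h4.le]
    rw [this, ← h1]
  have hr_lt : ∀ y ∈ Metric.ball (0:ℝ) ε, |y * Real.sqrt (G y)| < 1 := by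
    intro y hy
    obtain ⟨_, _, h3, _⟩ := hmem y hy
    refine (sq_lt_one_iff_abs_lt_one _).mp ?_
    rw [hr_sq y hy]
    nlinarith
  -- Φ is smooth on the ball
  have hΦsmooth : ContDiffOn ℝ (⊤ : ℕ∞) Φ (Metric.ball 0 ε) := by
    intro x hx
    obtain ⟨_, h2, _, h4⟩ := hmem x hx
    have hr : ContDiffAt ℝ (⊤ : ℕ∞) (fun y => y * Real.sqrt (G y)) x := by
      exact contDiffAt_id.mul ((contDiffAt_sqrt h4.ne').comp x h2)
    have h1 : (x * Real.sqrt (G x)) ≠ -1 := by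
      have := hr_lt x hx; rw [abs_lt] at this; linarith [this.1]
    have h2' : (x * Real.sqrt (G x)) ≠ 1 := by
      have := hr_lt x hx; rw [abs_lt] at this; linarith [this.2]
    exact (contDiffAt_const.add
      ((Real.contDiffAt_arcsin h1 h2').comp x hr)).contDiffWithinAt
  -- sin Φ = F on the ball
  have hsin : ∀ y ∈ Metric.ball (0:ℝ) ε, Real.sin (Φ y) = F y := by
    intro y hy
    obtain ⟨_, _, h3, _⟩ := hmem y hy
    rw [hΦdef]
    simp only [Real.sin_add, Real.sin_pi_div_two, Real.cos_pi_div_two, one_mul, zero_mul,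
      add_zero, Real.cos_arcsin]
    rw [hr_sq y hy]
    have : (1 : ℝ) - (1 - F y ^ 2) = F y ^ 2 := by ring
    rw [this, Real.sqrt_sq h3.le]
  -- g = Φ on the ball
  have hEq : ∀ y ∈ Metric.ball (0:ℝ) ε, g y = Φ y := by
    intro y hy
    obtain ⟨_, _, h3, h4⟩ := hmem y hy
    have hFy1 : |F y| ≤ 1 := by
      rcases eq_or_ne y 0 with h | h
      · simp [h, hF0]
      · exact (hFlt y h).le
    have habs := abs_le.mp hFy1
    rcases lt_trichotomy y 0 with hlt | heq0 | hgt
    · -- y < 0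
      rw [hg y, if_pos hlt]
      have hrneg : y * Real.sqrt (G y) ≤ 0 :=
        mul_nonpos_of_nonpos_of_nonneg hlt.le (Real.sqrt_nonneg _)
      have harc : Real.arcsin (y * Real.sqrt (G y)) ≤ 0 := Real.arcsin_nonpos.mpr hrneg
      apply Real.injOn_sin
      · exact ⟨Real.neg_pi_div_two_le_arcsin _, Real.arcsin_le_pi_div_two _⟩
      · constructor
        · have := Real.neg_pi_div_two_le_arcsin (y * Real.sqrt (G y))
          have hpi := Real.pi_pos
          rw [hΦdef]; dsimp only; linarith
        · rw [hΦdef]; dsimp only; linarith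
      · rw [Real.sin_arcsin habs.1 habs.2, hsin y hy]
    · -- y = 0
      rw [hg y, if_neg (by rw [heq0]; exact lt_irrefl 0), if_pos heq0, hΦdef, heq0]
      simp
    · -- y > 0
      rw [hg y, if_neg (not_lt.mpr hgt.le), if_neg (ne_of_gt hgt)]
      have hrpos : 0 ≤ y * Real.sqrt (G y) :=
        mul_nonneg hgt.le (Real.sqrt_nonneg _)
      have harc : 0 ≤ Real.arcsin (y * Real.sqrt (G y)) := Real.arcsin_nonneg.mpr hrpos
      have harc2 : Real.arcsin (y * Real.sqrt (G y)) ≤ Real.pi/2 :=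
        Real.arcsin_le_pi_div_two _
      have key : Real.arcsin (F y) = Real.pi - Φ y := by
        apply Real.injOn_sin
        · exact ⟨Real.neg_pi_div_two_le_arcsin _, Real.arcsin_le_pi_div_two _⟩
        · constructor
          · rw [hΦdef]; dsimp only; linarith
          · rw [hΦdef]; dsimp only; have hpi := Real.pi_pos; linarith
        · rw [Real.sin_arcsin habs.1 habs.2, Real.sin_pi_sub, hsin y hy]
      rw [key]; ring
  exact (hΦsmooth.congr hEq)
end

section
/- Suppose f(r) = 1 (respectively f(r) = −1), so that x(π/2) = r (respectively x(3π/2) = r). Then the function H(ψ) = h(x(ψ)) satisfies H(π/2) = 1, H'(π/2) = 0 and H''(π/2) = 0 (respectively H(3π/2) = 1, H'(3π/2) = 0 and H''(3π/2) = 0); in particular the second derivative of ψ ↦ h(x(ψ)) vanishes at the point where h(x(ψ)) = 1. -/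
open Set Filter Topology

theorem stmt_16 (M a l Q θ rp r : ℝ) (Δ f h X : ℝ → ℝ)
    (hM : 0 < M) (ha : 0 < a) (hsub : 0 < M^2 - a^2 + l^2 - Q^2)
    (hθ : θ ∈ Set.Ioo 0 Real.pi)
    (hΔ : ∀ x, Δ x = x^2 - 2*M*x + a^2 - l^2 + Q^2)
    (hrp : rp = M + Real.sqrt (M^2 - a^2 + l^2 - Q^2))
    (hf : ∀ x, f x = ((2*x - 2*M) * (x^2 + (l + a*Real.cos θ)^2) - 4*x*Δ x) /
        (4*a*x*Real.sqrt (Δ x) * Real.sin θ))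
    (hanti : StrictAntiOn f (Set.Ioi rp))
    (hbij : Set.BijOn f (Set.Ioi rp) Set.univ)
    (hXmem : ∀ ψ, X ψ ∈ Set.Ioi rp) (hXeq : ∀ ψ, f (X ψ) = Real.sin ψ)
    (hr : rp < r)
    (hh : ∀ x, h x = 4*x*Real.sqrt (Δ r * Δ x) /
        ((2*x - 2*M)*(r^2 - x^2) + 4*x*Δ x))
    (hhval : ∀ x ∈ Set.Ioi rp, 0 < h x ∧ h x ≤ 1 ∧ (h x = 1 ↔ x = r)) :
    (f r = 1 → X (Real.pi/2) = r ∧ h (X (Real.pi/2)) = 1 ∧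
        deriv (fun ψ => h (X ψ)) (Real.pi/2) = 0 ∧
        deriv (deriv (fun ψ => h (X ψ))) (Real.pi/2) = 0) ∧
      (f r = -1 → X (3*Real.pi/2) = r ∧ h (X (3*Real.pi/2)) = 1 ∧
        deriv (fun ψ => h (X ψ)) (3*Real.pi/2) = 0 ∧
        deriv (deriv (fun ψ => h (X ψ))) (3*Real.pi/2) = 0) := by
  have hsin0 : 0 < Real.sin θ := Real.sin_pos_of_pos_of_lt_pi hθ.1 hθ.2
  have hsqe0 : 0 < Real.sqrt (M^2 - a^2 + l^2 - Q^2) := Real.sqrt_pos.mpr hsub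
  have hMrp : M < rp := by rw [hrp]; linarith
  have hrp0 : 0 < rp := lt_trans hM hMrp
  -- positivity of Δ (in polynomial form) on Ioi rp
  have hPpos : ∀ x ∈ Set.Ioi rp, 0 < x^2 - 2*M*x + a^2 - l^2 + Q^2 := by
    intro x hx
    have h1 : Real.sqrt (M^2-a^2+l^2-Q^2) ^ 2 = M^2-a^2+l^2-Q^2 := Real.sq_sqrt hsub.le
    have h2 : Real.sqrt (M^2-a^2+l^2-Q^2) < x - M := by
      have : rp < x := hx
      rw [hrp] at this; linarith
    nlinarith [Real.sqrt_nonneg (M^2-a^2+l^2-Q^2)]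
  have hxpos : ∀ x ∈ Set.Ioi rp, 0 < x := fun x hx => lt_trans hrp0 hx
  have hupos : ∀ x ∈ Set.Ioi rp, 0 < Real.sqrt (x^2 - 2*M*x + a^2 - l^2 + Q^2) :=
    fun x hx => Real.sqrt_pos.mpr (hPpos x hx)
  have hMx : ∀ x ∈ Set.Ioi rp, M < x := fun x hx => lt_trans hMrp hx
  have hΔfun : ∀ x, Δ x = x^2 - 2*M*x + a^2 - l^2 + Q^2 := hΔ
  -- rewrite the formulas for f and h in polynomial form
  have hf' : ∀ x, f x = ((2*x - 2*M) * (x^2 + (l + a*Real.cos θ)^2)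
      - 4*x*(x^2 - 2*M*x + a^2 - l^2 + Q^2)) /
      (4*a*x*Real.sqrt (x^2 - 2*M*x + a^2 - l^2 + Q^2) * Real.sin θ) := by
    intro x; rw [hf x, hΔ x]
  have hh' : ∀ x, h x = 4*x*Real.sqrt ((r^2 - 2*M*r + a^2 - l^2 + Q^2)
      * (x^2 - 2*M*x + a^2 - l^2 + Q^2)) /
      ((2*x - 2*M)*(r^2 - x^2) + 4*x*(x^2 - 2*M*x + a^2 - l^2 + Q^2)) := by
    intro x; rw [hh x, hΔ x, hΔ r]
  have hPr : 0 < r^2 - 2*M*r + a^2 - l^2 + Q^2 := hPpos r hr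
  -- denominator of h is positive on Ioi rp
  have hdenh : ∀ x ∈ Set.Ioi rp, 0 < (2*x - 2*M)*(r^2 - x^2) + 4*x*(x^2 - 2*M*x + a^2 - l^2 + Q^2) := by
    intro x hx
    have hnum : 0 < 4*x*Real.sqrt ((r^2 - 2*M*r + a^2 - l^2 + Q^2) * (x^2 - 2*M*x + a^2 - l^2 + Q^2)) := by
      have := Real.sqrt_pos.mpr (mul_pos hPr (hPpos x hx))
      have hx0 := hxpos x hx
      positivity
    rcases lt_trichotomy ((2*x - 2*M)*(r^2 - x^2) + 4*x*(x^2 - 2*M*x + a^2 - l^2 + Q^2)) 0 with hlt|heq|hgt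
    · exfalso
      have hneg : h x < 0 := by rw [hh' x]; exact div_neg_of_pos_of_neg hnum hlt
      linarith [(hhval x hx).1]
    · exfalso
      have h0 : h x = 0 := by rw [hh' x, heq, div_zero]
      linarith [(hhval x hx).1]
    · exact hgt
  -- smoothness of h on Ioi rp
  have hcdh : ContDiffOn ℝ (⊤ : ℕ∞) h (Set.Ioi rp) := by
    apply ContDiffOn.congr (f := fun x => 4*x*Real.sqrt ((r^2 - 2*M*r + a^2 - l^2 + Q^2)
      * (x^2 - 2*M*x + a^2 - l^2 + Q^2)) /
      ((2*x - 2*M)*(r^2 - x^2) + 4*x*(x^2 - 2*M*x + a^2 - l^2 + Q^2)))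
    · intro x hx
      apply ContDiffAt.contDiffWithinAt
      apply ContDiffAt.div
      · apply ContDiffAt.mul (by fun_prop)
        exact ContDiffAt.sqrt (by fun_prop) (ne_of_gt (mul_pos hPr (hPpos x hx)))
      · fun_prop
      · exact ne_of_gt (hdenh x hx)
    · exact fun x _ => hh' x
  have hdh_cont : ContinuousOn (deriv h) (Set.Ioi rp) :=
    hcdh.continuousOn_deriv_of_isOpen isOpen_Ioi (by simp)
  have hdiffh : ∀ x ∈ Set.Ioi rp, HasDerivAt h (deriv h x) x := by
    intro x hx
    exact ((hcdh.contDiffAt (isOpen_Ioi.mem_nhds hx)).differentiableAt (by simp)).hasDerivAt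
  have hhr1 : h r = 1 := ((hhval r hr).2.2).mpr rfl
  have hdh_r : deriv h r = 0 := by
    apply IsLocalMax.deriv_eq_zero
    filter_upwards [isOpen_Ioi.mem_nhds hr] with x hx
    rw [hhr1]; exact (hhval x hx).2.1
  -- smoothness of f on Ioi rp
  have hdenf : ∀ x ∈ Set.Ioi rp,
      (4*a*x*Real.sqrt (x^2 - 2*M*x + a^2 - l^2 + Q^2) * Real.sin θ) ≠ 0 := by
    intro x hx
    exact ne_of_gt (mul_pos (mul_pos (mul_pos (by linarith : (0:ℝ) < 4*a) (hxpos x hx))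
      (hupos x hx)) hsin0)
  have hcdf : ContDiffOn ℝ (⊤ : ℕ∞) f (Set.Ioi rp) := by
    apply ContDiffOn.congr (f := fun x => ((2*x - 2*M) * (x^2 + (l + a*Real.cos θ)^2)
      - 4*x*(x^2 - 2*M*x + a^2 - l^2 + Q^2)) /
      (4*a*x*Real.sqrt (x^2 - 2*M*x + a^2 - l^2 + Q^2) * Real.sin θ))
    · intro x hx
      apply ContDiffAt.contDiffWithinAt
      apply ContDiffAt.div
      · fun_prop
      · apply ContDiffAt.mul ?_ contDiffAt_const
        exact ContDiffAt.mul (by fun_prop) (ContDiffAt.sqrt (by fun_prop) (ne_of_gt (hPpos x hx)))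
      · exact hdenf x hx
    · exact fun x _ => hf' x
  have hdf_cont : ContinuousOn (deriv f) (Set.Ioi rp) :=
    hcdf.continuousOn_deriv_of_isOpen isOpen_Ioi (by simp)
  -- explicit derivative of f, and its nonvanishing
  have hfhas : ∀ x ∈ Set.Ioi rp, HasDerivAt f (deriv f x) x ∧ deriv f x ≠ 0 := by
    intro x hx
    have hPx := hPpos x hx
    have hux := hupos x hx
    have huxne : Real.sqrt (x^2 - 2*M*x + a^2 - l^2 + Q^2) ≠ 0 := ne_of_gt hux
    have hPd : HasDerivAt (fun y : ℝ => y^2 - 2*M*y + a^2 - l^2 + Q^2) (2*x - 2*M) x := by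
      have h1 : HasDerivAt (fun y : ℝ => y^2) (2*x) x := by simpa using hasDerivAt_pow 2 x
      have h2 : HasDerivAt (fun y : ℝ => 2*M*y) (2*M) x := by
        simpa using (hasDerivAt_id x).const_mul (2*M)
      exact (((h1.sub h2).add_const (a^2)).sub_const (l^2)).add_const (Q^2)
    have hsq : HasDerivAt (fun y : ℝ => Real.sqrt (y^2 - 2*M*y + a^2 - l^2 + Q^2))
        ((2*x - 2*M) / (2*Real.sqrt (x^2 - 2*M*x + a^2 - l^2 + Q^2))) x :=
      hPd.sqrt (ne_of_gt hPx)
    have hNum : HasDerivAt (fun y : ℝ => (2*y - 2*M) * (y^2 + (l + a*Real.cos θ)^2)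
        - 4*y*(y^2 - 2*M*y + a^2 - l^2 + Q^2))
        (2*(x^2 + (l + a*Real.cos θ)^2) + (2*x - 2*M)*(2*x)
          - (4*(x^2 - 2*M*x + a^2 - l^2 + Q^2) + 4*x*(2*x - 2*M))) x := by
      have hA : HasDerivAt (fun y : ℝ => 2*y - 2*M) 2 x := by
        simpa using ((hasDerivAt_id x).const_mul 2).sub_const (2*M)
      have hB : HasDerivAt (fun y : ℝ => y^2 + (l + a*Real.cos θ)^2) (2*x) x := by
        simpa using (hasDerivAt_pow 2 x).add_const ((l + a*Real.cos θ)^2)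
      have hC : HasDerivAt (fun y : ℝ => 4*y) 4 x := by
        simpa using (hasDerivAt_id x).const_mul 4
      exact (hA.mul hB).sub (hC.mul hPd)
    have hDen : HasDerivAt (fun y : ℝ => 4*a*y*Real.sqrt (y^2 - 2*M*y + a^2 - l^2 + Q^2) * Real.sin θ)
        ((4*a*Real.sqrt (x^2 - 2*M*x + a^2 - l^2 + Q^2)
          + 4*a*x*((2*x - 2*M)/(2*Real.sqrt (x^2 - 2*M*x + a^2 - l^2 + Q^2)))) * Real.sin θ) x := by
      have hE : HasDerivAt (fun y : ℝ => 4*a*y) (4*a) x := by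
        simpa using (hasDerivAt_id x).const_mul (4*a)
      exact (hE.mul hsq).mul_const (Real.sin θ)
    have hdiv := hNum.div hDen (hdenf x hx)
    have hfd : HasDerivAt f
        (((2*(x^2 + (l + a*Real.cos θ)^2) + (2*x - 2*M)*(2*x)
          - (4*(x^2 - 2*M*x + a^2 - l^2 + Q^2) + 4*x*(2*x - 2*M)))
            * (4*a*x*Real.sqrt (x^2 - 2*M*x + a^2 - l^2 + Q^2) * Real.sin θ)
          - ((2*x - 2*M) * (x^2 + (l + a*Real.cos θ)^2)
            - 4*x*(x^2 - 2*M*x + a^2 - l^2 + Q^2))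
            * ((4*a*Real.sqrt (x^2 - 2*M*x + a^2 - l^2 + Q^2)
              + 4*a*x*((2*x - 2*M)/(2*Real.sqrt (x^2 - 2*M*x + a^2 - l^2 + Q^2)))) * Real.sin θ))
          / (4*a*x*Real.sqrt (x^2 - 2*M*x + a^2 - l^2 + Q^2) * Real.sin θ)^2) x := by
      apply HasDerivAt.congr_of_eventuallyEq hdiv
      exact Filter.Eventually.of_forall (fun y => hf' y)
    -- the numerator of the derivative is nonzero
    have husq : Real.sqrt (x^2 - 2*M*x + a^2 - l^2 + Q^2) ^ 2 = x^2 - 2*M*x + a^2 - l^2 + Q^2 :=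
      Real.sq_sqrt hPx.le
    have hkey : Real.sqrt (x^2 - 2*M*x + a^2 - l^2 + Q^2) *
        ((2*(x^2 + (l + a*Real.cos θ)^2) + (2*x - 2*M)*(2*x)
          - (4*(x^2 - 2*M*x + a^2 - l^2 + Q^2) + 4*x*(2*x - 2*M)))
            * (4*a*x*Real.sqrt (x^2 - 2*M*x + a^2 - l^2 + Q^2) * Real.sin θ)
          - ((2*x - 2*M) * (x^2 + (l + a*Real.cos θ)^2)
            - 4*x*(x^2 - 2*M*x + a^2 - l^2 + Q^2))
            * ((4*a*Real.sqrt (x^2 - 2*M*x + a^2 - l^2 + Q^2)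
              + 4*a*x*((2*x - 2*M)/(2*Real.sqrt (x^2 - 2*M*x + a^2 - l^2 + Q^2)))) * Real.sin θ))
        = 2*a*Real.sin θ * (-4*(x^2 + (l + a*Real.cos θ)^2)
            * ((x - M)^3 + M*(M^2 - a^2 + l^2 - Q^2))) := by
      have hs : Real.sqrt (x^2 - 2*M*x + a^2 - l^2 + Q^2) *
          (4*a*x*((2*x - 2*M)/(2*Real.sqrt (x^2 - 2*M*x + a^2 - l^2 + Q^2))))
          = 2*a*x*(2*x - 2*M) := by
        rw [show (4*a*x*((2*x - 2*M)/(2*Real.sqrt (x^2 - 2*M*x + a^2 - l^2 + Q^2))))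
            = (2*a*x*(2*x - 2*M)) * (Real.sqrt (x^2 - 2*M*x + a^2 - l^2 + Q^2))⁻¹ by ring,
          mul_comm, mul_assoc, inv_mul_cancel₀ huxne, mul_one]
      linear_combination ((2*(x^2 + (l + a*Real.cos θ)^2) + (2*x - 2*M)*(2*x)
          - (4*(x^2 - 2*M*x + a^2 - l^2 + Q^2) + 4*x*(2*x - 2*M))) * (4*a*x*Real.sin θ)
        - ((2*x - 2*M) * (x^2 + (l + a*Real.cos θ)^2)
              - 4*x*(x^2 - 2*M*x + a^2 - l^2 + Q^2)) * (4*a*Real.sin θ)) * husq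
        - ((2*x - 2*M) * (x^2 + (l + a*Real.cos θ)^2)
              - 4*x*(x^2 - 2*M*x + a^2 - l^2 + Q^2)) * Real.sin θ * hs
    have hKpos : 0 < x^2 + (l + a*Real.cos θ)^2 :=
      add_pos_of_pos_of_nonneg (pow_pos (hxpos x hx) 2) (sq_nonneg _)
    have hcube : 0 < (x - M)^3 + M*(M^2 - a^2 + l^2 - Q^2) := by
      have hxm : 0 < x - M := by
        have := hMx x hx
        linarith
      exact add_pos (pow_pos hxm 3) (mul_pos hM hsub)
    have hRHSne : 2*a*Real.sin θ * (-4*(x^2 + (l + a*Real.cos θ)^2)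
        * ((x - M)^3 + M*(M^2 - a^2 + l^2 - Q^2))) ≠ 0 := by
      have h1 : 0 < (x^2 + (l + a*Real.cos θ)^2) * ((x - M)^3 + M*(M^2 - a^2 + l^2 - Q^2)) :=
        mul_pos hKpos hcube
      have h3 : 0 < 8*a*Real.sin θ*((x^2 + (l + a*Real.cos θ)^2)
          * ((x - M)^3 + M*(M^2 - a^2 + l^2 - Q^2))) :=
        mul_pos (mul_pos (mul_pos (by linarith : (0:ℝ) < 8) ha) hsin0) h1
      have h5 : 2*a*Real.sin θ * (-4*(x^2 + (l + a*Real.cos θ)^2)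
          * ((x - M)^3 + M*(M^2 - a^2 + l^2 - Q^2)))
          = -(8*a*Real.sin θ*((x^2 + (l + a*Real.cos θ)^2)
          * ((x - M)^3 + M*(M^2 - a^2 + l^2 - Q^2)))) := by ring
      rw [h5]
      exact neg_ne_zero.mpr (ne_of_gt h3)
    have htne : ((2*(x^2 + (l + a*Real.cos θ)^2) + (2*x - 2*M)*(2*x)
          - (4*(x^2 - 2*M*x + a^2 - l^2 + Q^2) + 4*x*(2*x - 2*M)))
            * (4*a*x*Real.sqrt (x^2 - 2*M*x + a^2 - l^2 + Q^2) * Real.sin θ)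
          - ((2*x - 2*M) * (x^2 + (l + a*Real.cos θ)^2)
            - 4*x*(x^2 - 2*M*x + a^2 - l^2 + Q^2))
            * ((4*a*Real.sqrt (x^2 - 2*M*x + a^2 - l^2 + Q^2)
              + 4*a*x*((2*x - 2*M)/(2*Real.sqrt (x^2 - 2*M*x + a^2 - l^2 + Q^2)))) * Real.sin θ)) ≠ 0 := by
      intro h0
      rw [h0, mul_zero] at hkey
      exact hRHSne hkey.symm
    have hvne : (((2*(x^2 + (l + a*Real.cos θ)^2) + (2*x - 2*M)*(2*x)
          - (4*(x^2 - 2*M*x + a^2 - l^2 + Q^2) + 4*x*(2*x - 2*M)))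
            * (4*a*x*Real.sqrt (x^2 - 2*M*x + a^2 - l^2 + Q^2) * Real.sin θ)
          - ((2*x - 2*M) * (x^2 + (l + a*Real.cos θ)^2)
            - 4*x*(x^2 - 2*M*x + a^2 - l^2 + Q^2))
            * ((4*a*Real.sqrt (x^2 - 2*M*x + a^2 - l^2 + Q^2)
              + 4*a*x*((2*x - 2*M)/(2*Real.sqrt (x^2 - 2*M*x + a^2 - l^2 + Q^2)))) * Real.sin θ))
          / (4*a*x*Real.sqrt (x^2 - 2*M*x + a^2 - l^2 + Q^2) * Real.sin θ)^2) ≠ 0 :=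
      div_ne_zero htne (pow_ne_zero 2 (hdenf x hx))
    refine ⟨hfd.differentiableAt.hasDerivAt, ?_⟩
    rw [hfd.deriv]
    exact hvne
  -- the inverse function
  have hne : Nonempty ℝ := inferInstance
  set finv := Function.invFunOn f (Set.Ioi rp) with hfinvdef
  have hmem : ∀ s : ℝ, finv s ∈ Set.Ioi rp ∧ f (finv s) = s := by
    intro s
    obtain ⟨x, hx, rfl⟩ := hbij.surjOn (Set.mem_univ s)
    exact ⟨Function.invFunOn_mem ⟨x, hx, rfl⟩, Function.invFunOn_eq ⟨x, hx, rfl⟩⟩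
  have hXfinv : ∀ ψ, X ψ = finv (Real.sin ψ) := by
    intro ψ
    apply hbij.injOn (hXmem ψ) (hmem (Real.sin ψ)).1
    rw [hXeq, (hmem (Real.sin ψ)).2]
  have hcont_finv : ∀ s : ℝ, ContinuousAt finv s := by
    intro s
    rw [Metric.continuousAt_iff]
    intro ε hε
    set x0 := finv s with hx0def
    have hrpx : rp < x0 := (hmem s).1
    set ε' := min (ε/2) ((x0 - rp)/2) with hε'def
    have hε'pos : 0 < ε' := lt_min (by linarith) (by linarith)
    have hε'le : ε' ≤ ε/2 := min_le_left _ _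
    have hε'le2 : ε' ≤ (x0 - rp)/2 := min_le_right _ _
    have hx1 : x0 - ε' ∈ Set.Ioi rp := by simp only [Set.mem_Ioi]; linarith
    have hx2 : x0 + ε' ∈ Set.Ioi rp := by simp only [Set.mem_Ioi]; linarith
    have hfx0 : f x0 = s := (hmem s).2
    have hlt1 : f (x0 + ε') < s := by
      have := hanti (hmem s).1 hx2 (by linarith)
      rwa [hfx0] at this
    have hlt2 : s < f (x0 - ε') := by
      have := hanti hx1 (hmem s).1 (by linarith)
      rwa [hfx0] at this
    refine ⟨min (s - f (x0 + ε')) (f (x0 - ε') - s), lt_min (by linarith) (by linarith), ?_⟩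
    intro y hy
    obtain ⟨hyA, hyB⟩ := lt_min_iff.mp hy
    rw [Real.dist_eq] at hyA hyB ⊢
    have hy1 : f (x0 + ε') < y := by have := (abs_lt.mp hyA).1; linarith
    have hy2 : y < f (x0 - ε') := by have := (abs_lt.mp hyB).2; linarith
    have hmy := hmem y
    have hgt : x0 - ε' < finv y := by
      by_contra hle
      push_neg at hle
      have hle2 : f (x0 - ε') ≤ f (finv y) := by
        rcases eq_or_lt_of_le hle with heq | hlt
        · rw [heq]
        · exact le_of_lt (hanti hmy.1 hx1 hlt)
      rw [hmy.2] at hle2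
      linarith
    have hltu : finv y < x0 + ε' := by
      by_contra hle
      push_neg at hle
      have hle2 : f (finv y) ≤ f (x0 + ε') := by
        rcases eq_or_lt_of_le hle with heq | hlt
        · rw [← heq]
        · exact le_of_lt (hanti hx2 hmy.1 hlt)
      rw [hmy.2] at hle2
      linarith
    have habs : |finv y - x0| < ε' := abs_lt.mpr ⟨by linarith, by linarith⟩
    calc |finv y - x0| < ε' := habs
      _ ≤ ε/2 := hε'le
      _ < ε := by linarith
  -- the main argument, uniform in the base point
  have main : ∀ ψ0 : ℝ, Real.sin ψ0 = f r → Real.cos ψ0 = 0 →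
      X ψ0 = r ∧ h (X ψ0) = 1 ∧ deriv (fun ψ => h (X ψ)) ψ0 = 0 ∧
      deriv (deriv (fun ψ => h (X ψ))) ψ0 = 0 := by
    intro ψ0 hsin hcos
    have hX0 : X ψ0 = r := by
      apply hbij.injOn (hXmem ψ0) hr
      rw [hXeq, hsin]
    have hh1 : h (X ψ0) = 1 := by rw [hX0]; exact hhr1
    have hXder : ∀ ψ, HasDerivAt X ((deriv f (X ψ))⁻¹ * Real.cos ψ) ψ := by
      intro ψ
      have h1 : HasDerivAt finv (deriv f (finv (Real.sin ψ)))⁻¹ (Real.sin ψ) := by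
        apply HasDerivAt.of_local_left_inverse (hcont_finv (Real.sin ψ))
          (hfhas _ (hmem (Real.sin ψ)).1).1 (hfhas _ (hmem (Real.sin ψ)).1).2
        exact Filter.Eventually.of_forall (fun y => (hmem y).2)
      have h2 : HasDerivAt (fun ψ => finv (Real.sin ψ))
          ((deriv f (finv (Real.sin ψ)))⁻¹ * Real.cos ψ) ψ :=
        h1.comp ψ (Real.hasDerivAt_sin ψ)
      have hXe : X = fun ψ => finv (Real.sin ψ) := funext hXfinv
      rw [hXe]
      exact h2
    have hGder : ∀ ψ, HasDerivAt (fun ψ => h (X ψ))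
        (deriv h (X ψ) * ((deriv f (X ψ))⁻¹ * Real.cos ψ)) ψ := by
      intro ψ
      exact (hdiffh _ (hXmem ψ)).comp ψ (hXder ψ)
    have hDfun : ∀ ψ, deriv (fun ψ => h (X ψ)) ψ
        = deriv h (X ψ) * ((deriv f (X ψ))⁻¹ * Real.cos ψ) := fun ψ => (hGder ψ).deriv
    have hD0 : deriv (fun ψ => h (X ψ)) ψ0 = 0 := by
      rw [hDfun ψ0, hcos]; ring
    have hXcont : ContinuousAt X ψ0 := by
      have hXe : X = fun ψ => finv (Real.sin ψ) := funext hXfinv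
      rw [hXe]
      exact (hcont_finv (Real.sin ψ0)).comp Real.continuous_sin.continuousAt
    have hXtend : Filter.Tendsto X (𝓝 ψ0) (𝓝 r) := hX0 ▸ hXcont.tendsto
    have hc1 : Filter.Tendsto (fun ψ => deriv h (X ψ)) (𝓝 ψ0) (𝓝 0) := by
      have h1 : ContinuousAt (deriv h) r := hdh_cont.continuousAt (isOpen_Ioi.mem_nhds hr)
      have h2 := h1.tendsto.comp hXtend
      rw [hdh_r] at h2
      exact h2
    have hdfrne : deriv f r ≠ 0 := (hfhas r hr).2
    have hc2 : Filter.Tendsto (fun ψ => (deriv f (X ψ))⁻¹) (𝓝 ψ0) (𝓝 (deriv f r)⁻¹) := by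
      have h1 : ContinuousAt (deriv f) r := hdf_cont.continuousAt (isOpen_Ioi.mem_nhds hr)
      exact (h1.tendsto.comp hXtend).inv₀ hdfrne
    have hc3 : Filter.Tendsto (slope Real.cos ψ0) (𝓝[≠] ψ0) (𝓝 (-Real.sin ψ0)) :=
      hasDerivAt_iff_tendsto_slope.mp (Real.hasDerivAt_cos ψ0)
    have hprod := (((hc1.mul hc2).mono_left nhdsWithin_le_nhds).mul hc3)
    rw [show (0:ℝ) * (deriv f r)⁻¹ * (-Real.sin ψ0) = 0 by ring] at hprod
    have heq : ∀ ψ, deriv h (X ψ) * (deriv f (X ψ))⁻¹ * slope Real.cos ψ0 ψ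
        = slope (deriv (fun ψ => h (X ψ))) ψ0 ψ := by
      intro ψ
      rw [slope_def_field, slope_def_field, hDfun ψ, hD0, hcos]
      ring
    have hfinal : Filter.Tendsto (slope (deriv (fun ψ => h (X ψ))) ψ0) (𝓝[≠] ψ0) (𝓝 0) :=
      hprod.congr heq
    have h2nd : HasDerivAt (deriv (fun ψ => h (X ψ))) 0 ψ0 :=
      hasDerivAt_iff_tendsto_slope.mpr hfinal
    exact ⟨hX0, hh1, hD0, h2nd.deriv⟩
  constructor
  · intro hfr
    exact main (Real.pi/2) (by rw [Real.sin_pi_div_two, hfr]) Real.cos_pi_div_two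
  · intro hfr
    have h3 : (3*Real.pi/2 : ℝ) = Real.pi + Real.pi/2 := by ring
    apply main
    · rw [h3, Real.sin_add, Real.sin_pi_div_two, Real.cos_pi_div_two, Real.sin_pi, Real.cos_pi, hfr]
      ring
    · rw [h3, Real.cos_add, Real.sin_pi_div_two, Real.cos_pi_div_two, Real.sin_pi, Real.cos_pi]
      ring
end
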